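/- arXiv:math/0401091 — 9 statements merged into one kernel-verified Lean document; each statement's English description precedes it below -/
import Mathlib

section
/- Let (X, μ) and (Y, ν) be standard Borel spaces equipped with finite Borel measures and let m = μ × ν be the product measure on X × Y. If a measurable set E ⊆ X × Y is X-scattered with respect to μ, then there exist measurable sets A_j ⊆ X and B_j ⊆ Y (j ∈ ℕ) such that the symmetric difference of E and ⋃_{j∈ℕ} (A_j × B_j) is m-null. -/
open MeasureTheory

/-- A family `F` of subsets of `X` is `μ`-scattered if every decreasing sequence of
members of `F` `μ`-stabilizes: there is `N` such that `μ (U N \ U n) = 0` for all `n ≥ N`. -/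
def MuScattered {X : Type*} [MeasurableSpace X] (μ : Measure X) (F : Set (Set X)) : Prop :=
  ∀ U : ℕ → Set X, (∀ n, U n ∈ F) → (∀ n, U (n + 1) ⊆ U n) →
    ∃ N : ℕ, ∀ n, N ≤ n → μ (U N \ U n) = 0

/-- A set `E ⊆ X × Y` is `X`-scattered (with respect to `μ`) if the family of all finite
(nonempty) intersections of `X`-sections of `E` is `μ`-scattered. -/
def XScattered {X Y : Type*} [MeasurableSpace X] (μ : Measure X) (E : Set (X × Y)) : Prop :=
  MuScattered μ
    {U : Set X | ∃ s : Finset Y, s.Nonempty ∧ U = ⋂ y ∈ s, {x : X | (x, y) ∈ E}}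

/-!
Let `F` be the family of finite intersections of `X`-sections of `E`: it is closed under `∩`,
and since `μ` is finite on a countably generated space, it has a countable subfamily `D` that is
dense for the pseudometric `μ (U ∆ V)`. Approximate a section `S` by `dⱼ ∈ D` with
`∑ μ (S ∆ dⱼ) < ε`. The partial intersections `d₀ ∩ ⋯ ∩ dₙ` decrease in `F`, so by scatteredness
they stabilize up to null sets at some `W`. Then `W` lies a.e. inside every `dⱼ`, hence a.e.
inside `S`, while `μ (S \ W) < ε`. Thus every section is exhausted, up to null sets, by those
finite intersections `A` of members of `D` (countably many) that it a.e. contains, and by Tonelli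
`E` agrees a.e. with the union of the rectangles `A ×ˢ {y | A ⊆ E^y a.e.}`.
-/

open Set Filter symmDiff

section

variable {X : Type*} [MeasurableSpace X] {μ : Measure X} {F : Set (Set X)}

variable (μ F) in
theorem exists_countable_subset_forall_measure_symmDiff_lt [IsFiniteMeasure μ] [IsSeparable μ]
    (hF : ∀ U ∈ F, MeasurableSet U) :
    ∃ D ⊆ F, D.Countable ∧ ∀ U ∈ F, ∀ ε ≠ 0, ∃ V ∈ D, μ (U ∆ V) < ε := by
  obtain ⟨𝒜, h𝒜c, h𝒜⟩ := exists_countable_measureDense (μ := μ)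
  have happrox : ∀ U ∈ F, ∀ ε ≠ 0, ∃ t ∈ 𝒜, μ (U ∆ t) < ε := by
    intro U hU ε hε
    obtain ⟨r, -, hr0, hrε⟩ := ENNReal.lt_iff_exists_real_btwn.1 (pos_iff_ne_zero.2 hε)
    obtain ⟨t, ht, hUt⟩ := h𝒜.approx U (hF U hU) (measure_ne_top μ U) r (ENNReal.ofReal_pos.1 hr0)
    exact ⟨t, ht, hUt.trans hrε⟩
  have hpick : ∀ (t : Set X) (n : ℕ), ∃ V, (∃ U ∈ F, μ (U ∆ t) < (n : ENNReal)⁻¹) →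
      V ∈ F ∧ μ (V ∆ t) < (n : ENNReal)⁻¹ := by
    intro t n
    by_cases h : ∃ U ∈ F, μ (U ∆ t) < (n : ENNReal)⁻¹
    · obtain ⟨U, hU⟩ := h
      exact ⟨U, fun _ => hU⟩
    · exact ⟨∅, fun h' => absurd h' h⟩
  choose pick hpick using hpick
  refine ⟨F ∩ image2 pick 𝒜 univ, inter_subset_left,
    (h𝒜c.image2 countable_univ pick).mono inter_subset_right, fun U hU ε hε => ?_⟩
  obtain ⟨n, hn⟩ := ENNReal.exists_inv_nat_lt (ENNReal.half_pos hε).ne'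
  obtain ⟨t, ht, hUt⟩ := happrox U hU _ (ENNReal.inv_ne_zero.2 (ENNReal.natCast_ne_top n))
  obtain ⟨hpF, hpt⟩ := hpick t n ⟨U, hU, hUt⟩
  refine ⟨pick t n, ⟨hpF, mem_image2_of_mem ht (mem_univ n)⟩, ?_⟩
  calc μ (U ∆ pick t n) ≤ μ (U ∆ t) + μ (t ∆ pick t n) := measure_symmDiff_le _ _ _
    _ < ε / 2 + ε / 2 := by
      rw [symmDiff_comm t]
      exact ENNReal.add_lt_add (hUt.trans hn) (hpt.trans hn)
    _ = ε := ENNReal.add_halves ε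

theorem MuScattered.exists_measure_sdiff_iInter_eq_zero (hF : MuScattered μ F)
    {W : ℕ → Set X} (hWF : ∀ n, W n ∈ F) (hW : Antitone W) :
    ∃ N, μ (W N \ ⋂ n, W n) = 0 := by
  obtain ⟨N, hN⟩ := hF W hWF fun n => hW n.le_succ
  refine ⟨N, ?_⟩
  rw [sdiff_iInter]
  refine measure_iUnion_null fun n => ?_
  rcases le_total N n with h | h
  · exact hN n h
  · simp [sdiff_eq_empty.2 (hW h)]

theorem MuScattered.exists_dissipate_ae_subset (hF : MuScattered μ F)
    (hFi : ∀ U ∈ F, ∀ V ∈ F, U ∩ V ∈ F) {S : Set X} {d : ℕ → Set X} (hd : ∀ j, d j ∈ F)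
    (hdS : ∑' j, μ (S ∆ d j) ≠ ⊤) :
    ∃ N, μ (dissipate d N \ S) = 0 ∧ μ (S \ dissipate d N) ≤ ∑' j, μ (S ∆ d j) := by
  have hWF : ∀ n, dissipate d n ∈ F := by
    intro n
    induction n with
    | zero => simpa using hd 0
    | succ n ih => simpa using hFi _ ih _ (hd (n + 1))
  obtain ⟨N, hN⟩ := hF.exists_measure_sdiff_iInter_eq_zero hWF antitone_dissipate
  rw [iInter_dissipate] at hN
  have hlim : μ ((⋂ j, d j) \ S) = 0 := by
    refine le_antisymm (ge_of_tendsto' (ENNReal.tendsto_atTop_zero_of_tsum_ne_top hdS)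
      fun j => measure_mono ?_) zero_le
    exact (sdiff_subset_sdiff_left (iInter_subset d j)).trans subset_union_right
  refine ⟨N, measure_mono_null (sdiff_triangle _ _ _) (measure_union_null hN hlim), ?_⟩
  calc μ (S \ dissipate d N) ≤ μ (⋃ j, S \ d j) :=
        measure_mono ((sdiff_subset_sdiff_right (iInter_subset_dissipate N)).trans
          (sdiff_iInter S d).subset)
    _ ≤ ∑' j, μ (S \ d j) := measure_iUnion_le _
    _ ≤ ∑' j, μ (S ∆ d j) := ENNReal.tsum_le_tsum fun j => measure_mono subset_union_left

theorem exists_seq_tsum_measure_symmDiff_lt {D : Set (Set X)} {S : Set X}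
    (hS : ∀ ε ≠ 0, ∃ V ∈ D, μ (S ∆ V) < ε) {ε : ENNReal} (hε : ε ≠ 0) :
    ∃ d : ℕ → Set X, (∀ j, d j ∈ D) ∧ ∑' j, μ (S ∆ d j) < ε := by
  obtain ⟨δ, hδ, hδε⟩ := ENNReal.exists_pos_sum_of_countable' hε ℕ
  choose d hdD hd using fun j => hS (δ j) (hδ j).ne'
  exact ⟨d, hdD, (ENNReal.tsum_le_tsum fun j => (hd j).le).trans_lt hδε⟩

theorem MuScattered.exists_finset_biInter_ae_subset (hF : MuScattered μ F)
    (hFi : ∀ U ∈ F, ∀ V ∈ F, U ∩ V ∈ F) {D : Set (Set X)} (hDF : D ⊆ F) {S : Set X}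
    (hS : ∀ ε ≠ 0, ∃ V ∈ D, μ (S ∆ V) < ε) {ε : ENNReal} (hε : ε ≠ 0) :
    ∃ s : Finset D, μ ((⋂ V ∈ s, (V : Set X)) \ S) = 0 ∧ μ (S \ ⋂ V ∈ s, (V : Set X)) < ε := by
  obtain ⟨d, hdD, hdε⟩ := exists_seq_tsum_measure_symmDiff_lt hS hε
  obtain ⟨N, hWS, hSW⟩ := hF.exists_dissipate_ae_subset hFi (fun j => hDF (hdD j)) hdε.ne_top
  have hW : ⋂ V ∈ (Finset.range (N + 1)).image (fun j => (⟨d j, hdD j⟩ : D)), (V : Set X) =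
      dissipate d N := by
    simp [dissipate_eq_biInter_lt]
  exact ⟨_, hW ▸ hWS, hW ▸ hSW.trans_lt hdε⟩

end

section

variable {X Y : Type*} [MeasurableSpace X] [MeasurableSpace Y] {μ : Measure X} {ν : Measure Y}
  [SFinite μ]

theorem Measure.prod_null_of_ae_preimage_prodMk_right_null [SFinite ν] {s : Set (X × Y)}
    (hs : MeasurableSet s) (h : ∀ᵐ y ∂ν, μ ((fun x => (x, y)) ⁻¹' s) = 0) :
    μ.prod ν s = 0 := by
  rw [Measure.prod_apply_symm hs, lintegral_congr_ae h, lintegral_zero]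

variable (μ) in
theorem measurableSet_setOf_measure_sdiff_section_eq_zero {E : Set (X × Y)} (hE : MeasurableSet E)
    {A : Set X} (hA : MeasurableSet A) :
    MeasurableSet {y : Y | μ (A \ {x | (x, y) ∈ E}) = 0} :=
  measurable_measure_prodMk_right ((measurable_fst hA).diff hE) (measurableSet_singleton 0)

theorem measure_prod_symmDiff_iUnion_eq_zero [SFinite ν] {ι : Type*} [Countable ι]
    {E : Set (X × Y)} (hE : MeasurableSet E) {A : ι → Set X} (hA : ∀ i, MeasurableSet (A i))
    (happrox : ∀ y, ∀ ε ≠ 0,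
      ∃ i, μ (A i \ {x | (x, y) ∈ E}) = 0 ∧ μ ({x | (x, y) ∈ E} \ A i) < ε) :
    μ.prod ν (E ∆ ⋃ i, A i ×ˢ {y | μ (A i \ {x | (x, y) ∈ E}) = 0}) = 0 := by
  set B : ι → Set Y := fun i => {y | μ (A i \ {x | (x, y) ∈ E}) = 0}
  have hB : ∀ i, MeasurableSet (B i) :=
    fun i => measurableSet_setOf_measure_sdiff_section_eq_zero μ hE (hA i)
  have hU : MeasurableSet (⋃ i, A i ×ˢ B i) := .iUnion fun i => (hA i).prod (hB i)
  refine measure_union_null ?_ ?_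
  · refine Measure.prod_null_of_ae_preimage_prodMk_right_null (hE.diff hU) (.of_forall fun y => ?_)
    refine nonpos_iff_eq_zero.1 (le_of_forall_gt fun ε hε => ?_)
    obtain ⟨i, hiB, hi⟩ := happrox y ε hε.ne'
    refine (measure_mono fun x (hx : (x, y) ∈ E \ ⋃ i, A i ×ˢ B i) => ?_).trans_lt hi
    exact ⟨hx.1, fun hxA => hx.2 (mem_iUnion.2 ⟨i, hxA, hiB⟩)⟩
  · rw [iUnion_sdiff]
    refine measure_iUnion_null fun i => Measure.prod_null_of_ae_preimage_prodMk_right_null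
      (((hA i).prod (hB i)).diff hE) (.of_forall fun y => ?_)
    by_cases hy : y ∈ B i
    · refine measure_mono_null (fun x (hx : (x, y) ∈ A i ×ˢ B i \ E) => ?_) hy
      exact ⟨hx.1.1, hx.2⟩
    · exact measure_mono_null (fun x (hx : (x, y) ∈ A i ×ˢ B i \ E) => hy hx.1.2) measure_empty

end

theorem xScattered_symmDiff_iUnion_rectangles_null_general
    {X Y : Type*} [MeasurableSpace X] [MeasurableSpace Y]
    [StandardBorelSpace X]
    (μ : Measure X) (ν : Measure Y) [IsFiniteMeasure μ] [IsFiniteMeasure ν]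
    (E : Set (X × Y)) (hE : MeasurableSet E) (hscat : XScattered μ E) :
    ∃ (A : ℕ → Set X) (B : ℕ → Set Y),
      (∀ j, MeasurableSet (A j)) ∧ (∀ j, MeasurableSet (B j)) ∧
      (μ.prod ν) (symmDiff E (⋃ j, A j ×ˢ B j)) = 0 := by
  set F : Set (Set X) := {U | ∃ s : Finset Y, s.Nonempty ∧ U = ⋂ y ∈ s, {x | (x, y) ∈ E}}
  have hFm : ∀ U ∈ F, MeasurableSet U := by
    rintro U ⟨s, -, rfl⟩
    exact .biInter s.countable_toSet fun y _ => measurable_prodMk_right hE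
  have hFi : ∀ U ∈ F, ∀ V ∈ F, U ∩ V ∈ F := by
    classical
    rintro U ⟨s, hs, rfl⟩ V ⟨t, -, rfl⟩
    exact ⟨s ∪ t, hs.mono Finset.subset_union_left, (Finset.set_biInter_inter s t _).symm⟩
  have hsec : ∀ y, {x | (x, y) ∈ E} ∈ F := fun y => ⟨{y}, Finset.singleton_nonempty y, by simp⟩
  obtain ⟨D, hDF, hDc, hD⟩ := exists_countable_subset_forall_measure_symmDiff_lt μ F hFm
  have : Countable D := hDc.to_subtype
  set A : Finset D → Set X := fun s => ⋂ V ∈ s, (V : Set X)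
  have hA : ∀ s, MeasurableSet (A s) :=
    fun s => .biInter s.countable_toSet fun V _ => hFm V (hDF V.2)
  have hnull := measure_prod_symmDiff_iUnion_eq_zero (ν := ν) hE hA fun y _ hε =>
    MuScattered.exists_finset_biInter_ae_subset hscat hFi hDF (hD _ (hsec y)) hε
  set B : Finset D → Set Y := fun s => {y | μ (A s \ {x | (x, y) ∈ E}) = 0}
  obtain ⟨e, he⟩ := exists_surjective_nat (Finset D)
  refine ⟨A ∘ e, B ∘ e, fun j => hA (e j),
    fun j => measurableSet_setOf_measure_sdiff_section_eq_zero μ hE (hA (e j)), ?_⟩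
  exact he.iUnion_comp (fun s => A s ×ˢ B s) ▸ hnull

/-- Any `X`-scattered measurable subset of the product of two standard Borel spaces with
finite measures is `μ × ν`-equivalent to a countable union of measurable rectangles. -/
theorem xScattered_symmDiff_iUnion_rectangles_null
    {X Y : Type*} [MeasurableSpace X] [MeasurableSpace Y]
    [StandardBorelSpace X] [StandardBorelSpace Y]
    (μ : Measure X) (ν : Measure Y) [IsFiniteMeasure μ] [IsFiniteMeasure ν]
    (E : Set (X × Y)) (hE : MeasurableSet E) (hscat : XScattered μ E) :
    ∃ (A : ℕ → Set X) (B : ℕ → Set Y),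
      (∀ j, MeasurableSet (A j)) ∧ (∀ j, MeasurableSet (B j)) ∧
      (μ.prod ν) (symmDiff E (⋃ j, A j ×ˢ B j)) = 0 :=
  xScattered_symmDiff_iUnion_rectangles_null_general μ ν E hE hscat
end

section
/- Let X and Y be measurable spaces, μ a finite measure on X, N ∈ ℕ, and let a_i : X → ℂ and b_i : Y → ℂ be measurable functions for 1 ≤ i ≤ N. Then the set E = {(x,y) ∈ X × Y : Σ_{i=1}^N a_i(x) b_i(y) = 0} is X-scattered with respect to μ. -/
open MeasureTheory

/-- The zero set of a function of finite length `∑ i, a i x * b i y` is `X`-scattered. -/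
theorem xScattered_zeroSet_of_finite_length
    {X Y : Type*} [MeasurableSpace X] [MeasurableSpace Y]
    (μ : Measure X) [IsFiniteMeasure μ] (N : ℕ)
    (a : Fin N → X → ℂ) (b : Fin N → Y → ℂ)
    (ha : ∀ i, Measurable (a i)) (hb : ∀ i, Measurable (b i)) :
    XScattered μ {p : X × Y | ∑ i, a i p.1 * b i p.2 = 0} := by
  intro U hU hdec
  have hmono : ∀ m n, m ≤ n → U n ⊆ U m := by
    intro m n h
    induction h with
    | refl => exact subset_rfl
    | step h ih => exact (hdec _).trans ih
  choose s hsne hUs using hU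
  set A : X → (Fin N → ℂ) := fun x i => a i x with hA
  set f : Y → Submodule ℂ (Fin N → ℂ) :=
    fun y => LinearMap.ker (∑ i, b i y • (LinearMap.proj i : (Fin N → ℂ) →ₗ[ℂ] ℂ)) with hf
  set W : ℕ → Submodule ℂ (Fin N → ℂ) :=
    fun n => ⨅ k ∈ Finset.range (n + 1), ⨅ y ∈ s k, f y with hW
  have hWanti : ∀ m n, m ≤ n → W n ≤ W m := by
    intro m n h
    refine le_iInf₂ fun k hk => ?_
    exact iInf₂_le k (Finset.mem_range.2 ((Finset.mem_range.1 hk).trans_le (by omega)))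
  have hmemf : ∀ (x : X) (y : Y), A x ∈ f y ↔ ∑ i, a i x * b i y = 0 := by
    intro x y
    simp only [hf, LinearMap.mem_ker, LinearMap.coe_sum, Finset.sum_apply,
      LinearMap.smul_apply, LinearMap.proj_apply, smul_eq_mul, hA]
    constructor <;> intro h <;> rw [← h] <;> exact Finset.sum_congr rfl fun i _ => mul_comm _ _
  have hUW : ∀ n, U n = A ⁻¹' (W n : Set (Fin N → ℂ)) := by
    intro n
    ext x
    simp only [Set.mem_preimage, SetLike.mem_coe, hW, Submodule.mem_iInf, Finset.mem_range]
    constructor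
    · intro hx k hk y hy
      have hxk : x ∈ U k := hmono k n (by omega) hx
      rw [hUs k] at hxk
      have := Set.mem_iInter₂.1 hxk y hy
      exact (hmemf x y).2 this
    · intro h
      rw [hUs n]
      refine Set.mem_iInter₂.2 fun y hy => ?_
      exact (hmemf x y).1 (h n (by omega) y hy)
  -- stabilization of the decreasing chain of submodules
  set g : ℕ → ℕ := fun n => Module.finrank ℂ (W n) with hg
  have hrange : (Set.range g).Nonempty := ⟨g 0, 0, rfl⟩
  obtain ⟨M, hM⟩ := Nat.sInf_mem hrange
  refine ⟨M, fun n hn => ?_⟩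
  have hWn : W n = W M := by
    refine Submodule.eq_of_le_of_finrank_le (hWanti M n hn) ?_
    have h1 : g M ≤ g n := hM ▸ Nat.sInf_le ⟨n, rfl⟩
    exact h1
  rw [hUW, hUW, hWn, Set.diff_self]
  exact measure_empty
end

section
/- Let (X, μ) and (Y, ν) be standard Borel spaces with finite Borel measures, N ∈ ℕ, and let a_i : X → ℂ, b_i : Y → ℂ be measurable functions (1 ≤ i ≤ N). Then the set E = {(x,y) ∈ X × Y : Σ_{i=1}^N a_i(x) b_i(y) = 0} can be written as E = S ∪ ⋃_{j∈ℕ} (A_j × B_j), where the A_j ⊆ X and B_j ⊆ Y are measurable sets and S is measurable with (μ × ν)(S) = 0. -/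
open MeasureTheory Set
open scoped ENNReal

/-!
Push `ν` forward along `y ↦ (b i y)ᵢ` to a finite measure `ρ` on `ℂ^N`. By exhaustion and
induction on the dimension, `ℂ^N` is covered by countably many measurable pieces `P ⊆ W`, with
`W` a subspace, such that `ρ (P ∩ W') = 0` for every proper subspace `W' < W`. Over such a piece
the zero set is the rectangle `{x | a x ⊥ W} × b⁻¹(P)` up to a null set: for any other `x`, the
section at `x` lies in `b⁻¹(P ∩ W ∩ (a x)^⊥)`, and `W ∩ (a x)^⊥ < W`.
-/

theorem exists_countable_measure_diff_biUnion_eq_zero {α ι : Type*} [MeasurableSpace α]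
    (ρ : Measure α) [IsFiniteMeasure ρ] {F : ι → Set α} (hF : ∀ i, MeasurableSet (F i)) :
    ∃ s : Set ι, s.Countable ∧ ∀ i, ρ (F i \ ⋃ k ∈ s, F k) = 0 := by
  set S : Set ℝ≥0∞ := {m | ∃ s : Set ι, s.Countable ∧ ρ (⋃ k ∈ s, F k) = m}
  obtain ⟨u, -, hu, huS⟩ :=
    exists_seq_tendsto_sSup (S := S) ⟨0, ∅, countable_empty, by simp⟩ (OrderTop.bddAbove S)
  choose s hs hsu using huS
  refine ⟨⋃ n, s n, countable_iUnion hs, fun i => ?_⟩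
  set U := ⋃ k ∈ ⋃ n, s n, F k
  have hUmeas : MeasurableSet U := .biUnion (countable_iUnion hs) fun k _ => hF k
  -- `U` has maximal measure among countable unions, so adding `F i` adds no mass
  have hsup : sSup S ≤ ρ U := le_of_tendsto' hu fun n =>
    hsu n ▸ measure_mono (biUnion_subset_biUnion_left (subset_iUnion s n))
  have hins : ρ (U ∪ F i \ U) ≤ ρ U := by
    have hmem : ρ (U ∪ F i \ U) ∈ S := ⟨insert i (⋃ n, s n), (countable_iUnion hs).insert i, by
      rw [biUnion_insert, union_sdiff_self, union_comm]⟩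
    exact (le_sSup hmem).trans hsup
  rw [measure_union disjoint_sdiff_right ((hF i).diff hUmeas)] at hins
  exact nonpos_iff_eq_zero.1
    (ENNReal.le_of_add_le_add_left (measure_ne_top ρ U) (by rwa [add_zero]))

section Pieces

variable {K E : Type*} [DivisionRing K] [AddCommGroup E] [Module K E] [MeasurableSpace E]

def IsNondegeneratePiece (ρ : Measure E) (W : Submodule K E) (P : Set E) : Prop :=
  MeasurableSet P ∧ P ⊆ W ∧ ∀ W' < W, ρ (P ∩ W') = 0

theorem exists_countable_isNondegeneratePiece_biUnion_eq [FiniteDimensional K E]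
    (ρ : Measure E) [IsFiniteMeasure ρ] (hE : ∀ W : Submodule K E, MeasurableSet (W : Set E))
    (W : Submodule K E) {T : Set E} (hT : MeasurableSet T) (hTW : T ⊆ W) :
    ∃ C : Set (Submodule K E × Set E), C.Countable ∧
      (∀ p ∈ C, IsNondegeneratePiece ρ p.1 p.2) ∧ ⋃ p ∈ C, p.2 = T := by
  induction W using WellFoundedLT.induction generalizing T with
  | ind W ih =>
  -- `T₀` charges no proper subspace, and `T \ T₀` lies in countably many of them
  obtain ⟨s, hs, hnull⟩ := exists_countable_measure_diff_biUnion_eq_zero ρ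
    (F := fun W' : {W' : Submodule K E // W' < W} => T ∩ W') fun W' => hT.inter (hE W')
  set T₀ := T \ ⋃ W' ∈ s, T ∩ (W'.1 : Set E)
  have hT₀ : IsNondegeneratePiece ρ W T₀ := by
    refine ⟨hT.diff (.biUnion hs fun W' _ => hT.inter (hE W')), sdiff_subset.trans hTW,
      fun W' hW' => ?_⟩
    rw [← hnull ⟨W', hW'⟩, inter_sdiff_right_comm]
  choose C hCc hC hCU using fun W' : {W' : Submodule K E // W' < W} =>
    ih W'.1 W'.2 (hT.inter (hE W'.1)) inter_subset_right
  refine ⟨insert (W, T₀) (⋃ W' ∈ s, C W'), (hs.biUnion fun W' _ => hCc W').insert _, ?_, ?_⟩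
  · rintro p (rfl | hp)
    · exact hT₀
    · obtain ⟨W', -, hp⟩ := mem_iUnion₂.1 hp
      exact hC W' p hp
  · simp only [biUnion_insert, biUnion_iUnion, hCU]
    exact sdiff_union_of_subset (iUnion₂_subset fun _ _ => inter_subset_left)

end Pieces

section ZeroSet

variable {X Y K E : Type*} [DivisionRing K] [AddCommGroup E] [Module K E]
  {φ : X → E →ₗ[K] K} {f : Y → E}

theorem zeroSet_inter_prod_preimage_eq {W : Submodule K E} {P : Set E} (hPW : P ⊆ W) :
    {p : X × Y | φ p.1 (f p.2) = 0} ∩ univ ×ˢ (f ⁻¹' P) =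
      {x | W ≤ LinearMap.ker (φ x)} ×ˢ (f ⁻¹' P) ∪
        {p : X × Y | φ p.1 (f p.2) = 0} ∩ {x | W ≤ LinearMap.ker (φ x)}ᶜ ×ˢ (f ⁻¹' P) := by
  ext ⟨x, y⟩
  by_cases hx : W ≤ LinearMap.ker (φ x)
  · have : f y ∈ P → φ x (f y) = 0 := fun hy => hx (hPW hy)
    simp_all
  · simp [hx]

variable [MeasurableSpace X] [FiniteDimensional K E] [MeasurableSpace K]
  [MeasurableSingletonClass K]

theorem measurableSet_setOf_le_ker (hφ : ∀ w, Measurable fun x => φ x w) (W : Submodule K E) :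
    MeasurableSet {x | W ≤ LinearMap.ker (φ x)} := by
  obtain ⟨s, rfl⟩ := IsNoetherian.noetherian W
  have : {x | Submodule.span K s ≤ LinearMap.ker (φ x)} = ⋂ w ∈ s, (fun x => φ x w) ⁻¹' {0} := by
    ext x
    simp [Submodule.span_le, subset_def]
  rw [this]
  exact .biInter s.countable_toSet fun w _ => hφ w (measurableSet_singleton 0)

variable [MeasurableSpace Y] [MeasurableSpace E]

theorem measure_prod_zeroSet_inter_compl_prod_eq_zero (μ : Measure X) (ν : Measure Y)
    (hφ : ∀ w, Measurable fun x => φ x w) (hf : Measurable f)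
    (hZ : MeasurableSet {p : X × Y | φ p.1 (f p.2) = 0}) {W : Submodule K E} {P : Set E}
    (hP : IsNondegeneratePiece (ν.map f) W P) :
    μ.prod ν ({p : X × Y | φ p.1 (f p.2) = 0} ∩ {x | W ≤ LinearMap.ker (φ x)}ᶜ ×ˢ (f ⁻¹' P)) =
      0 := by
  refine Measure.measure_prod_null_of_ae_null
    (hZ.inter ((measurableSet_setOf_le_ker hφ W).compl.prod (hf hP.1))) (.of_forall fun x => ?_)
  by_cases hx : W ≤ LinearMap.ker (φ x)
  · simp [hx]
  · -- the section at `x` lies in the proper subspace `W ⊓ ker (φ x)` of `W`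
    refine measure_mono_null (t := f ⁻¹' (P ∩ ↑(W ⊓ LinearMap.ker (φ x)))) ?_ ?_
    · rintro y ⟨hy, -, hyP⟩
      exact ⟨hyP, hP.2.1 hyP, hy⟩
    · exact nonpos_iff_eq_zero.1 ((Measure.le_map_apply hf.aemeasurable _).trans_eq
        (hP.2.2 _ (inf_lt_left.2 hx)))

theorem exists_zeroSet_eq_union_biUnion_prod (μ : Measure X) (ν : Measure Y) [IsFiniteMeasure ν]
    (hE : ∀ W : Submodule K E, MeasurableSet (W : Set E)) (hφ : ∀ w, Measurable fun x => φ x w)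
    (hf : Measurable f) (hZ : MeasurableSet {p : X × Y | φ p.1 (f p.2) = 0}) :
    ∃ (S : Set (X × Y)) (R : Set (Set X × Set Y)), MeasurableSet S ∧ μ.prod ν S = 0 ∧
      R.Countable ∧ (∀ r ∈ R, MeasurableSet r.1 ∧ MeasurableSet r.2) ∧
      {p : X × Y | φ p.1 (f p.2) = 0} = S ∪ ⋃ r ∈ R, r.1 ×ˢ r.2 := by
  obtain ⟨C, hCc, hC, hCU⟩ := exists_countable_isNondegeneratePiece_biUnion_eq (ν.map f) hE ⊤
    MeasurableSet.univ (fun _ _ => Submodule.mem_top)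
  set Z := {p : X × Y | φ p.1 (f p.2) = 0}
  set A : Submodule K E → Set X := fun W => {x | W ≤ LinearMap.ker (φ x)}
  refine ⟨⋃ p ∈ C, Z ∩ (A p.1)ᶜ ×ˢ (f ⁻¹' p.2), (fun p => (A p.1, f ⁻¹' p.2)) '' C,
    .biUnion hCc fun p hp => hZ.inter ((measurableSet_setOf_le_ker hφ _).compl.prod
      (hf (hC p hp).1)),
    (measure_biUnion_null_iff hCc).2 fun p hp =>
      measure_prod_zeroSet_inter_compl_prod_eq_zero μ ν hφ hf hZ (hC p hp),
    hCc.image _, ?_, ?_⟩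
  · rintro _ ⟨p, hp, rfl⟩
    exact ⟨measurableSet_setOf_le_ker hφ _, hf (hC p hp).1⟩
  · calc Z = ⋃ p ∈ C, Z ∩ univ ×ˢ (f ⁻¹' p.2) := by
          rw [← inter_iUnion₂, ← prod_iUnion₂, ← preimage_iUnion₂, hCU, preimage_univ,
            univ_prod_univ, inter_univ]
      _ = ⋃ p ∈ C, (A p.1 ×ˢ (f ⁻¹' p.2) ∪ Z ∩ (A p.1)ᶜ ×ˢ (f ⁻¹' p.2)) :=
          iUnion₂_congr fun p hp => zeroSet_inter_prod_preimage_eq (hC p hp).2.1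
      _ = _ := by simp only [biUnion_image, iUnion_union_distrib, union_comm]

end ZeroSet

theorem exists_nat_iUnion_prod_eq_biUnion {X Y : Type*} [MeasurableSpace X] [MeasurableSpace Y]
    {R : Set (Set X × Set Y)} (hR : R.Countable)
    (hRm : ∀ r ∈ R, MeasurableSet r.1 ∧ MeasurableSet r.2) :
    ∃ (A : ℕ → Set X) (B : ℕ → Set Y), (∀ j, MeasurableSet (A j)) ∧
      (∀ j, MeasurableSet (B j)) ∧ ⋃ j, A j ×ˢ B j = ⋃ r ∈ R, r.1 ×ˢ r.2 := by
  obtain ⟨g, hg⟩ := (hR.insert (∅, ∅)).exists_eq_range (insert_nonempty _ _)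
  have hgm : ∀ j, MeasurableSet (g j).1 ∧ MeasurableSet (g j).2 := fun j => by
    rcases (hg ▸ mem_range_self j : g j ∈ insert (∅, ∅) R) with h | h
    · simp [h]
    · exact hRm _ h
  refine ⟨fun j => (g j).1, fun j => (g j).2, fun j => (hgm j).1, fun j => (hgm j).2, ?_⟩
  rw [← biUnion_range (f := g) (g := fun r => r.1 ×ˢ r.2), ← hg, biUnion_insert, empty_prod,
    empty_union]

theorem zeroSet_eq_union_rectangles_union_null_general
    {X Y : Type*} [MeasurableSpace X] [MeasurableSpace Y]
    (μ : Measure X) (ν : Measure Y) [IsFiniteMeasure ν]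
    (N : ℕ) (a : Fin N → X → ℂ) (b : Fin N → Y → ℂ)
    (ha : ∀ i, Measurable (a i)) (hb : ∀ i, Measurable (b i)) :
    ∃ (S : Set (X × Y)) (A : ℕ → Set X) (B : ℕ → Set Y),
      MeasurableSet S ∧ (∀ j, MeasurableSet (A j)) ∧ (∀ j, MeasurableSet (B j)) ∧
      (μ.prod ν) S = 0 ∧
      {p : X × Y | ∑ i, a i p.1 * b i p.2 = 0} = S ∪ ⋃ j, A j ×ˢ B j := by
  have hZ : Measurable fun p : X × Y => ∑ i, a i p.1 * b i p.2 := by fun_prop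
  obtain ⟨S, R, hS, hSnull, hRc, hRm, hSR⟩ := exists_zeroSet_eq_union_biUnion_prod μ ν
    (φ := fun x => dotProductBilin ℂ ℂ fun i => a i x) (f := fun y i => b i y)
    (fun W => (Submodule.closed_of_finiteDimensional W).measurableSet)
    (fun w => by simp only [dotProductBilin_apply_apply, dotProduct]; fun_prop)
    (measurable_pi_lambda _ hb) (measurableSet_eq_fun hZ measurable_const)
  obtain ⟨A, B, hA, hB, hAB⟩ := exists_nat_iUnion_prod_eq_biUnion hRc hRm
  exact ⟨S, A, B, hS, hA, hB, hSnull, hAB ▸ hSR⟩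

/-- The set of zeros of a function of finite length `∑ i, a i x * b i y` on the product of
two standard Borel spaces with finite measures is the union of countably many measurable
rectangles and a `μ × ν`-null set. -/
theorem zeroSet_eq_union_rectangles_union_null
    {X Y : Type*} [MeasurableSpace X] [MeasurableSpace Y]
    [StandardBorelSpace X] [StandardBorelSpace Y]
    (μ : Measure X) (ν : Measure Y) [IsFiniteMeasure μ] [IsFiniteMeasure ν]
    (N : ℕ) (a : Fin N → X → ℂ) (b : Fin N → Y → ℂ)
    (ha : ∀ i, Measurable (a i)) (hb : ∀ i, Measurable (b i)) :
    ∃ (S : Set (X × Y)) (A : ℕ → Set X) (B : ℕ → Set Y),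
      MeasurableSet S ∧ (∀ j, MeasurableSet (A j)) ∧ (∀ j, MeasurableSet (B j)) ∧
      (μ.prod ν) S = 0 ∧
      {p : X × Y | ∑ i, a i p.1 * b i p.2 = 0} = S ∪ ⋃ j, A j ×ˢ B j :=
  zeroSet_eq_union_rectangles_union_null_general μ ν N a b ha hb
end

section
/- Let A be a unital commutative semisimple regular Banach algebra over ℂ and a ∈ A. Then the following are equivalent: (1) a admits spectral synthesis, i.e., a lies in the closure of J_0(null(a)); (2) a admits synthesis with respect to the Banach A-module A' (the dual space with action (a·f)(b) = f(ab)); (3) a admits synthesis with respect to every Banach A-module M. -/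
/-!
(1) ⇒ (3): the annihilator of `x` is a closed ideal whose hull is `Supp(x) ⊆ null(a)`, and in a
semisimple regular algebra an ideal `I` contains `J₀(E)` as soon as its hull lies in `E`: for
`r ∈ J₀(E)`, a maximal-ideal argument using regularity yields `u ∈ I` with `û = 1` outside the
interior of `null(r)`, so `r(1 - u)` has zero Gelfand transform and `r = ru ∈ I`. Hence
`a ∈ closure J₀(null a) ⊆ ann(x)`.
(3) ⇒ (2) is the case `M = A'`, where `ann(f) = {b | ∀ c, f(bc) = 0}`.
(2) ⇒ (1): otherwise Hahn–Banach gives `f ∈ A'` vanishing on `J₀(null a)` with `f(a) ≠ 0`; since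
`J₀(null a)` is an ideal it lies in `ann(f)`, and regularity then forces `Supp(f) ⊆ null(a)`.
-/

open WeakDual

universe u

open Filter Topology

section HahnBanach

variable {𝕜 E : Type*} [RCLike 𝕜] [NormedAddCommGroup E] [NormedSpace 𝕜 E]

theorem Submodule.exists_dual_eq_zero_of_notMem_closure {p : Submodule 𝕜 E} {x : E}
    (hx : x ∉ closure (p : Set E)) :
    ∃ f : StrongDual 𝕜 E, (∀ y ∈ p, f y = 0) ∧ f x ≠ 0 := by
  set q := p.topologicalClosure
  have : IsClosed (q : Set E) := p.isClosed_topologicalClosure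
  have hxq : q.mkQL x ≠ 0 := by
    rwa [mkQL_apply, Ne, mkQ_apply, Quotient.mk_eq_zero, ← SetLike.mem_coe,
      topologicalClosure_coe]
  obtain ⟨g, hg⟩ := SeparatingDual.exists_ne_zero (R := 𝕜) hxq
  refine ⟨g.comp q.mkQL, fun y hy => ?_, hg⟩
  simp [(Quotient.mk_eq_zero q).mpr (p.le_topologicalClosure hy)]

end HahnBanach

theorem isClosed_ker_toSpanSingleton {R M : Type*} [NormedRing R] [NormedAddCommGroup M]
    [Module R M] {C : ℝ} (hC : ∀ (b : R) (x : M), ‖b • x‖ ≤ C * ‖b‖ * ‖x‖) (x : M) :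
    IsClosed ((LinearMap.toSpanSingleton R M x).ker : Set R) :=
  isClosed_singleton.preimage <| AddMonoidHomClass.continuous_of_bound
    (LinearMap.toSpanSingleton R M x) (C * ‖x‖) fun b => by
      simpa [mul_right_comm] using hC b x

namespace SpectralSynthesis

variable {A : Type u} [NormedCommRing A] [NormedAlgebra ℂ A]

variable (A) in
def IsSemisimpleAlgebra : Prop := ∀ b : A, (∀ χ : characterSpace ℂ A, χ b = 0) → b = 0

variable (A) in
def IsRegularAlgebra : Prop := ∀ E : Set (characterSpace ℂ A), IsClosed E →
  ∀ χ : characterSpace ℂ A, χ ∉ E → ∃ b : A, (∀ ψ ∈ E, ψ b = 0) ∧ χ b = 1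

def hull (S : Set A) : Set (characterSpace ℂ A) := {χ | ∀ b ∈ S, χ b = 0}

/-- The ideal `J₀(E)`. -/
def vanishingNearIdeal (E : Set (characterSpace ℂ A)) : Ideal A where
  carrier := {r : A | ∀ᶠ χ in 𝓝ˢ E, χ r = 0}
  add_mem' {r s} hr hs := by
    rw [Set.mem_ofPred_eq] at hr hs ⊢
    filter_upwards [hr, hs] with χ hr hs
    rw [map_add, hr, hs, add_zero]
  zero_mem' := by simp
  smul_mem' c r hr := by
    rw [Set.mem_ofPred_eq] at hr ⊢
    filter_upwards [hr] with χ hr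
    rw [smul_eq_mul, map_mul, hr, mul_zero]

theorem coe_vanishingNearIdeal (E : Set (characterSpace ℂ A)) :
    (vanishingNearIdeal E : Set A) =
      {r | ∃ U : Set (characterSpace ℂ A), IsOpen U ∧ E ⊆ U ∧ ∀ χ ∈ U, χ r = 0} :=
  Set.ext fun _ => eventually_nhdsSet_iff_exists

theorem exists_mem_vanishingNearIdeal_eq_one (hreg : IsRegularAlgebra A)
    {E : Set (characterSpace ℂ A)} (hE : IsClosed E) {χ : characterSpace ℂ A} (hχ : χ ∉ E) :
    ∃ b ∈ vanishingNearIdeal E, χ b = 1 := by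
  obtain ⟨U, hU, V, hV, hUV⟩ :=
    Filter.disjoint_iff.mp (disjoint_nhdsSet_nhds.mpr (hE.closure_eq ▸ hχ))
  obtain ⟨b, hb, hχb⟩ := hreg (interior V)ᶜ isOpen_interior.isClosed_compl χ
    (not_not.mpr (mem_interior_iff_mem_nhds.mpr hV))
  refine ⟨b, ?_, hχb⟩
  filter_upwards [hU] with ψ hψ
  exact hb ψ fun hψV => hUV.le_bot ⟨hψ, interior_subset hψV⟩

theorem exists_mem_forall_eq_one_of_disjoint_hull [CompleteSpace A]
    (hreg : IsRegularAlgebra A) (S : Ideal A) {K : Set (characterSpace ℂ A)} (hK : IsClosed K)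
    (hdisj : Disjoint K (hull (S : Set A))) :
    ∃ u ∈ S, ∀ χ ∈ K, χ u = 1 := by
  have htop : S ⊔ vanishingNearIdeal K = ⊤ := by
    by_contra hne
    obtain ⟨M, hM, hle⟩ := Ideal.exists_le_maximal _ hne
    have hχ : ∀ b ∈ S ⊔ vanishingNearIdeal K, M.toCharacterSpace b = 0 := fun b hb =>
      M.toCharacterSpace_apply_eq_zero_of_mem (hle hb)
    have hχK : M.toCharacterSpace ∈ K := by
      by_contra hχK
      obtain ⟨b, hb, hχb⟩ := exists_mem_vanishingNearIdeal_eq_one hreg hK hχK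
      exact one_ne_zero (hχb ▸ hχ b (Ideal.mem_sup_right hb))
    exact hdisj.notMem_of_mem_left hχK fun b hb => hχ b (Ideal.mem_sup_left hb)
  obtain ⟨u, hu, v, hv, huv⟩ := Submodule.mem_sup.mp (htop ▸ Submodule.mem_top (x := (1 : A)))
  refine ⟨u, hu, fun χ hχ => ?_⟩
  simpa [hv.self_of_nhdsSet χ hχ] using congrArg χ huv

theorem vanishingNearIdeal_le_of_hull_subset [CompleteSpace A] (hss : IsSemisimpleAlgebra A)
    (hreg : IsRegularAlgebra A) {S : Ideal A} {E : Set (characterSpace ℂ A)}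
    (hS : hull (S : Set A) ⊆ E) : vanishingNearIdeal E ≤ S := by
  intro r hr
  obtain ⟨u, hu, hu1⟩ := exists_mem_forall_eq_one_of_disjoint_hull hreg S
    isOpen_interior.isClosed_compl (K := (interior {χ | χ r = 0})ᶜ)
    (Set.disjoint_compl_left_iff_subset.mpr
      (hS.trans (subset_interior_iff_mem_nhdsSet.mpr hr)))
  have hru : r * (1 - u) = 0 := hss _ fun χ => by
    by_cases hχ : χ ∈ interior {χ | χ r = 0}
    · have hχr : χ ∈ {χ : characterSpace ℂ A | χ r = 0} := interior_subset hχ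
      simp [hχr.out]
    · simp [hu1 χ hχ]
  rw [mul_sub, mul_one, sub_eq_zero] at hru
  exact hru ▸ S.mul_mem_left r hu

def AdmitsSynthesis (a : A) (M : Type*) [AddCommGroup M] [Module A M] : Prop :=
  ∀ x : M, {χ : characterSpace ℂ A | ∀ b : A, b • x = 0 → χ b = 0} ⊆ {χ | χ a = 0} → a • x = 0

theorem admitsSynthesis_of_mem_closure [CompleteSpace A] (hss : IsSemisimpleAlgebra A)
    (hreg : IsRegularAlgebra A) {a : A}
    (ha : a ∈ closure (vanishingNearIdeal {χ : characterSpace ℂ A | χ a = 0} : Set A))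
    {M : Type*} [NormedAddCommGroup M] [Module A M] {C : ℝ}
    (hC : ∀ (b : A) (x : M), ‖b • x‖ ≤ C * ‖b‖ * ‖x‖) : AdmitsSynthesis a M := fun x hx =>
  closure_minimal (vanishingNearIdeal_le_of_hull_subset hss hreg hx)
    (isClosed_ker_toSpanSingleton hC x) ha

def AdmitsModuleSynthesis (a : A) : Prop :=
  ∀ (M : Type u) [NormedAddCommGroup M] [Module A M],
    (∃ C : ℝ, ∀ (b : A) (x : M), ‖b • x‖ ≤ C * ‖b‖ * ‖x‖) → CompleteSpace M → AdmitsSynthesis a M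

theorem admitsModuleSynthesis_of_mem_closure [CompleteSpace A] (hss : IsSemisimpleAlgebra A)
    (hreg : IsRegularAlgebra A) {a : A}
    (ha : a ∈ closure (vanishingNearIdeal {χ : characterSpace ℂ A | χ a = 0} : Set A)) :
    AdmitsModuleSynthesis a := fun _ _ _ ⟨_, hC⟩ _ => admitsSynthesis_of_mem_closure hss hreg ha hC

theorem mem_closure_vanishingNearIdeal_of_forall_dual (hreg : IsRegularAlgebra A) {a : A}
    (ha : ∀ f : StrongDual ℂ A,
      {χ : characterSpace ℂ A | ∀ b : A, (∀ c : A, f (b * c) = 0) → χ b = 0} ⊆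
        {χ | χ a = 0} → ∀ b : A, f (a * b) = 0) :
    a ∈ closure (vanishingNearIdeal {χ : characterSpace ℂ A | χ a = 0} : Set A) := by
  by_contra hna
  obtain ⟨f, hf, hfa⟩ := Submodule.exists_dual_eq_zero_of_notMem_closure
    (p := (vanishingNearIdeal {χ : characterSpace ℂ A | χ a = 0}).restrictScalars ℂ) hna
  have hsupp : {χ : characterSpace ℂ A | ∀ b : A, (∀ c : A, f (b * c) = 0) → χ b = 0} ⊆
      {χ | χ a = 0} := by
    intro χ hχ
    by_contra hχa
    have hnull : IsClosed {ψ : characterSpace ℂ A | ψ a = 0} :=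
      isClosed_eq ((eval_continuous a).comp continuous_subtype_val) continuous_const
    obtain ⟨b, hb, hχb⟩ := exists_mem_vanishingNearIdeal_eq_one hreg hnull hχa
    exact one_ne_zero (hχb ▸ hχ b fun c => hf _ (Ideal.mul_mem_right c _ hb))
  exact hfa (by simpa using ha f hsupp 1)

variable (A) in
def DualModule : Type u := StrongDual ℂ A

namespace DualModule

noncomputable instance : NormedAddCommGroup (DualModule A) :=
  inferInstanceAs (NormedAddCommGroup (StrongDual ℂ A))

instance : CompleteSpace (DualModule A) := inferInstanceAs (CompleteSpace (StrongDual ℂ A))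

noncomputable def ofStrongDual : StrongDual ℂ A ≃+ DualModule A := AddEquiv.refl _

noncomputable instance : SMul A (DualModule A) :=
  ⟨fun b f => ofStrongDual ((ofStrongDual.symm f).comp (ContinuousLinearMap.mul ℂ A b))⟩

@[simp]
theorem ofStrongDual_symm_smul_apply (b : A) (f : DualModule A) (c : A) :
    ofStrongDual.symm (b • f) c = ofStrongDual.symm f (b * c) := rfl

@[ext]
theorem ext {f g : DualModule A} (h : ∀ c, ofStrongDual.symm f c = ofStrongDual.symm g c) :
    f = g :=
  ofStrongDual.symm.injective (ContinuousLinearMap.ext h)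

noncomputable instance : Module A (DualModule A) where
  one_smul _ := by ext; simp
  mul_smul _ _ _ := by ext; simp [mul_assoc, mul_left_comm]
  smul_zero _ := by ext; simp
  smul_add _ _ _ := by ext; simp
  add_smul _ _ _ := by ext; simp [add_mul]
  zero_smul _ := by ext; simp

theorem norm_smul_le (b : A) (f : DualModule A) : ‖b • f‖ ≤ ‖b‖ * ‖f‖ :=
  calc ‖(ofStrongDual.symm f).comp (ContinuousLinearMap.mul ℂ A b)‖
      ≤ ‖ofStrongDual.symm f‖ * ‖ContinuousLinearMap.mul ℂ A b‖ :=
        ContinuousLinearMap.opNorm_comp_le _ _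
    _ ≤ ‖ofStrongDual.symm f‖ * ‖b‖ :=
        mul_le_mul_of_nonneg_left (ContinuousLinearMap.opNorm_mul_apply_le ℂ A b) (norm_nonneg _)
    _ = ‖b‖ * ‖f‖ := mul_comm _ _

theorem smul_ofStrongDual_eq_zero_iff {b : A} {f : StrongDual ℂ A} :
    b • ofStrongDual f = 0 ↔ ∀ c, f (b * c) = 0 := by
  rw [DualModule.ext_iff]
  simp

end DualModule

theorem AdmitsModuleSynthesis.dual {a : A} (ha : AdmitsModuleSynthesis a)
    (f : StrongDual ℂ A)
    (hf : {χ : characterSpace ℂ A | ∀ b : A, (∀ c : A, f (b * c) = 0) → χ b = 0} ⊆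
      {χ | χ a = 0}) (b : A) : f (a * b) = 0 := by
  have hbound : ∃ C : ℝ, ∀ (b : A) (f : DualModule A), ‖b • f‖ ≤ C * ‖b‖ * ‖f‖ :=
    ⟨1, fun b f => (one_mul ‖b‖).symm ▸ DualModule.norm_smul_le b f⟩
  exact DualModule.smul_ofStrongDual_eq_zero_iff.mp (ha _ hbound inferInstance _ fun _ hχ =>
    hf fun b hb => hχ b (DualModule.smul_ofStrongDual_eq_zero_iff.mpr hb)) b

end SpectralSynthesis

/-- For an element `a` of a unital commutative semisimple regular Banach algebra `A`,
the following are equivalent: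
(1) `a` admits spectral synthesis, i.e. `a` lies in the closure of `J₀(null a)`;
(2) `a` admits synthesis with respect to the dual Banach module `A'` with
    action `(a • f) b = f (a * b)`;
(3) `a` admits synthesis with respect to every Banach `A`-module. -/
theorem spectral_synthesis_tfae
    {A : Type u} [NormedCommRing A] [NormedAlgebra ℂ A] [CompleteSpace A]
    (hss : ∀ b : A, (∀ χ : characterSpace ℂ A, χ b = 0) → b = 0)
    (hreg : ∀ E : Set (characterSpace ℂ A), IsClosed E →
      ∀ χ : characterSpace ℂ A, χ ∉ E → ∃ b : A, (∀ ψ ∈ E, ψ b = 0) ∧ χ b = 1)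
    (a : A) :
    ((a ∈ closure {r : A | ∃ U : Set (characterSpace ℂ A), IsOpen U ∧
        {χ : characterSpace ℂ A | χ a = 0} ⊆ U ∧ ∀ χ ∈ U, χ r = 0}) ↔
      (∀ f : A →L[ℂ] ℂ,
        {χ : characterSpace ℂ A | ∀ b : A, (∀ c : A, f (b * c) = 0) → χ b = 0} ⊆
          {χ : characterSpace ℂ A | χ a = 0} →
        ∀ b : A, f (a * b) = 0)) ∧
    ((a ∈ closure {r : A | ∃ U : Set (characterSpace ℂ A), IsOpen U ∧
        {χ : characterSpace ℂ A | χ a = 0} ⊆ U ∧ ∀ χ ∈ U, χ r = 0}) ↔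
      (∀ (M : Type u) [NormedAddCommGroup M] [Module A M],
        (∃ C : ℝ, ∀ (b : A) (x : M), ‖b • x‖ ≤ C * ‖b‖ * ‖x‖) →
        ∀ (_ : CompleteSpace M) (x : M),
          {χ : characterSpace ℂ A | ∀ b : A, b • x = 0 → χ b = 0} ⊆
            {χ : characterSpace ℂ A | χ a = 0} →
          a • x = 0)) := by
  open SpectralSynthesis in
  · rw [← coe_vanishingNearIdeal]
    have of_dual := mem_closure_vanishingNearIdeal_of_forall_dual hreg (a := a)
    have to_modules := admitsModuleSynthesis_of_mem_closure hss hreg (a := a)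
    exact ⟨⟨fun h => (to_modules h).dual, of_dual⟩,
      ⟨to_modules, fun h => of_dual (AdmitsModuleSynthesis.dual h)⟩⟩
end

section
/- Let A be a unital commutative semisimple regular Banach algebra over ℂ, M a Banach A-module, x ∈ M and a ∈ A. Then Supp(x) ⊆ null(a) if and only if ‖aⁿ·x‖^{1/n} → 0 as n → ∞. -/
open WeakDual Filter
open scoped Topology

/-!
Let `I = ann x`, a closed ideal whose hull is `Supp x`: the characters of `A` vanishing on `I` are
exactly those factoring through the Banach algebra `A ⧸ I`. If `Supp x ⊆ null a`, the image of `a`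
in `A ⧸ I` therefore has spectrum in `{0}`, so `‖(a + I)ⁿ‖^{1/n} → 0` by Gelfand's formula, and
`‖aⁿ • x‖ ≤ C ‖x‖ ‖aⁿ + I‖`.

Conversely, let `χ ∈ Supp x` with `χ a ≠ 0`. Regularity gives `b` with `χ b = 1` whose Gelfand
transform is supported where `|â| ≥ |χ a| / 2`. Then `a` and `ann b` generate `A`: a character `ψ`
killing `a` lies off the support of `b̂`, regularity gives `d` with `ψ d = 1` and `d̂ = 0` on that
support, and semisimplicity gives `d b = 0`. So `c a b = b` for some `c`, and `b • x = (cⁿ b) • (aⁿ • x)` has norm at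
most `C ‖b‖ (‖c‖ ‖aⁿ • x‖^{1/n})ⁿ`, which tends to `0`. Hence `b ∈ ann x`, contradicting `χ b = 1`.
-/

theorem tendsto_const_rpow_one_div_nat {t : ℝ} (ht : 0 < t) :
    Tendsto (fun n : ℕ => t ^ ((1 : ℝ) / n)) atTop (𝓝 1) := by
  have h := ((Real.continuousAt_const_rpow ht.ne').tendsto).comp
    (tendsto_one_div_atTop_nhds_zero_nat (𝕜 := ℝ))
  rwa [Real.rpow_zero] at h

theorem eq_zero_of_tendsto_rpow_one_div_zero {t : ℝ} (ht : 0 ≤ t)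
    (h : Tendsto (fun n : ℕ => t ^ ((1 : ℝ) / n)) atTop (𝓝 0)) : t = 0 := by
  by_contra ht0
  exact one_ne_zero (tendsto_nhds_unique (tendsto_const_rpow_one_div_nat
    (lt_of_le_of_ne ht (Ne.symm ht0))) h)

theorem tendsto_rpow_one_div_zero_of_le_const_mul {u v : ℕ → ℝ} {K : ℝ}
    (hu : ∀ n, 0 ≤ u n) (hv : ∀ n, 0 ≤ v n) (huv : ∀ᶠ n in atTop, u n ≤ K * v n)
    (hv0 : Tendsto (fun n : ℕ => v n ^ ((1 : ℝ) / n)) atTop (𝓝 0)) :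
    Tendsto (fun n : ℕ => u n ^ ((1 : ℝ) / n)) atTop (𝓝 0) := by
  set K' := max K 1
  have hK' : 0 < K' := zero_lt_one.trans_le (le_max_right K 1)
  have hlim : Tendsto (fun n : ℕ => K' ^ ((1 : ℝ) / n) * v n ^ ((1 : ℝ) / n)) atTop (𝓝 0) := by
    simpa using (tendsto_const_rpow_one_div_nat hK').mul hv0
  refine squeeze_zero' (Eventually.of_forall fun n => Real.rpow_nonneg (hu n) _) ?_ hlim
  filter_upwards [huv] with n hn
  rw [← Real.mul_rpow hK'.le (hv n)]
  gcongr
  · exact hu n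
  · exact hn.trans (by gcongr; exacts [hv n, le_max_left K 1])

theorem tendsto_pow_mul_rpow_one_div_zero {r : ℝ} {v : ℕ → ℝ} (hr : 0 ≤ r)
    (hv : ∀ n, 0 ≤ v n) (hv0 : Tendsto (fun n : ℕ => v n ^ ((1 : ℝ) / n)) atTop (𝓝 0)) :
    Tendsto (fun n : ℕ => (r ^ n * v n) ^ ((1 : ℝ) / n)) atTop (𝓝 0) := by
  have hlim := hv0.const_mul r
  rw [mul_zero] at hlim
  refine hlim.congr' ?_
  filter_upwards [eventually_ne_atTop 0] with n hn
  rw [Real.mul_rpow (by positivity) (hv n), one_div, Real.pow_rpow_inv_natCast hr hn]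

theorem tendsto_norm_pow_rpow_one_div_zero_of_spectrum_subset {B : Type*} [NormedRing B]
    [NormedAlgebra ℂ B] [CompleteSpace B] {a : B} (ha : spectrum ℂ a ⊆ {0}) :
    Tendsto (fun n : ℕ => ‖a ^ n‖ ^ ((1 : ℝ) / n)) atTop (𝓝 0) := by
  have hρ : spectralRadius ℂ a = 0 :=
    le_antisymm (iSup₂_le fun z hz => by rw [ha hz, nnnorm_zero, ENNReal.coe_zero]) bot_le
  have h := spectrum.pow_norm_pow_one_div_tendsto_nhds_spectralRadius a
  rw [hρ] at h
  simpa [Function.comp_def, ENNReal.toReal_ofReal, Real.rpow_nonneg] using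
    (ENNReal.tendsto_toReal ENNReal.zero_ne_top).comp h

section BanachAlgebra

variable {A : Type*} [NormedCommRing A] [NormedAlgebra ℂ A] [CompleteSpace A]

theorem Ideal.exists_characterSpace_apply_eq_zero_of_ne_top {J : Ideal A} (hJ : J ≠ ⊤) :
    ∃ χ : characterSpace ℂ A, ∀ b ∈ J, χ b = 0 := by
  obtain ⟨m, hm, hJm⟩ := J.exists_le_maximal hJ
  exact ⟨m.toCharacterSpace, fun b hb => m.toCharacterSpace_apply_eq_zero_of_mem (hJm hb)⟩

theorem exists_characterSpace_of_mem_spectrum_quotient_mk {I : Ideal A} [IsClosed (I : Set A)]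
    {a : A} {z : ℂ} (hz : z ∈ spectrum ℂ (Ideal.Quotient.mk I a)) :
    ∃ χ : characterSpace ℂ A, (∀ b ∈ I, χ b = 0) ∧ χ a = z := by
  obtain ⟨f, rfl⟩ := CharacterSpace.mem_spectrum_iff_exists.mp hz
  refine ⟨CharacterSpace.equivAlgHom.symm
    ((CharacterSpace.equivAlgHom f).comp (Ideal.Quotient.mkₐ ℂ I)), fun b hb => ?_, rfl⟩
  change f (Ideal.Quotient.mk I b) = 0
  rw [Ideal.Quotient.eq_zero_iff_mem.mpr hb, map_zero]

end BanachAlgebra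

section BanachModule

variable {A : Type*} [NormedCommRing A] {M : Type*} [NormedAddCommGroup M] [Module A M]

theorem exists_nonneg_norm_smul_le (h : ∃ C : ℝ, ∀ (b : A) (y : M), ‖b • y‖ ≤ C * ‖b‖ * ‖y‖) :
    ∃ C : ℝ, 0 ≤ C ∧ ∀ (b : A) (y : M), ‖b • y‖ ≤ C * ‖b‖ * ‖y‖ := by
  obtain ⟨C, hC⟩ := h
  exact ⟨max C 0, le_max_right C 0, fun b y => (hC b y).trans (by gcongr; exact le_max_left C 0)⟩

variable {C : ℝ} (hC : ∀ (b : A) (y : M), ‖b • y‖ ≤ C * ‖b‖ * ‖y‖)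
include hC

theorem isClosed_torsionOf (x : M) : IsClosed (Ideal.torsionOf A M x : Set A) := by
  have hcont : Continuous (LinearMap.toSpanSingleton A M x) :=
    AddMonoidHomClass.continuous_of_bound _ (C * ‖x‖) fun b => by
      simpa only [LinearMap.toSpanSingleton_apply, mul_right_comm] using hC b x
  exact isClosed_singleton.preimage hcont

theorem norm_smul_le_mul_norm_quotient_mk_torsionOf (hC₀ : 0 ≤ C) (x : M) (b : A) :
    ‖b • x‖ ≤ C * ‖x‖ * ‖Ideal.Quotient.mk (Ideal.torsionOf A M x) b‖ := by
  have hnorm : ‖Ideal.Quotient.mk (Ideal.torsionOf A M x) b‖ =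
      Metric.infDist b (Ideal.torsionOf A M x) := QuotientAddGroup.norm_mk b
  rw [hnorm, Metric.infDist_eq_iInf, Real.mul_iInf_of_nonneg (by positivity)]
  refine le_ciInf fun i => ?_
  have hi : (i : A) • x = 0 := i.2
  calc ‖b • x‖ = ‖(b - i) • x‖ := by rw [sub_smul, hi, sub_zero]
    _ ≤ C * ‖x‖ * dist b i := by rw [dist_eq_norm]; linarith [hC (b - i) x]

theorem smul_eq_zero_of_mul_mul_eq_self (hC₀ : 0 ≤ C) {x : M} {a b c : A}
    (hcab : c * a * b = b)
    (h : Tendsto (fun n : ℕ => ‖(a ^ n) • x‖ ^ ((1 : ℝ) / n)) atTop (𝓝 0)) : b • x = 0 := by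
  have hpow : ∀ n : ℕ, c ^ n * a ^ n * b = b := by
    intro n
    induction n with
    | zero => simp
    | succ n ih => rw [show c ^ (n + 1) * a ^ (n + 1) * b = c ^ n * a ^ n * (c * a * b) by ring,
        hcab, ih]
  have hbound : ∀ᶠ n in atTop, ‖b • x‖ ≤ C * ‖b‖ * (‖c‖ ^ n * ‖(a ^ n) • x‖) := by
    filter_upwards [eventually_ne_atTop 0] with n hn
    calc ‖b • x‖ = ‖(c ^ n * b) • (a ^ n) • x‖ := by
          rw [smul_smul, mul_right_comm, hpow]
      _ ≤ C * ‖c ^ n * b‖ * ‖(a ^ n) • x‖ := hC _ _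
      _ ≤ C * (‖c‖ ^ n * ‖b‖) * ‖(a ^ n) • x‖ := by
          gcongr
          exact (norm_mul_le _ _).trans (by gcongr; exact norm_pow_le' c (Nat.pos_of_ne_zero hn))
      _ = C * ‖b‖ * (‖c‖ ^ n * ‖(a ^ n) • x‖) := by ring
  refine norm_eq_zero.mp (eq_zero_of_tendsto_rpow_one_div_zero (norm_nonneg _) ?_)
  exact tendsto_rpow_one_div_zero_of_le_const_mul (fun _ => norm_nonneg _)
    (fun n => by positivity) hbound
    (tendsto_pow_mul_rpow_one_div_zero (norm_nonneg c) (fun n => norm_nonneg _) h)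

variable [NormedAlgebra ℂ A] [CompleteSpace A]

theorem tendsto_norm_pow_smul_rpow_one_div_zero (hC₀ : 0 ≤ C) {x : M} {a : A}
    (h : ∀ χ : characterSpace ℂ A, (∀ b : A, b • x = 0 → χ b = 0) → χ a = 0) :
    Tendsto (fun n : ℕ => ‖(a ^ n) • x‖ ^ ((1 : ℝ) / n)) atTop (𝓝 0) := by
  have := isClosed_torsionOf hC x
  have hspec : spectrum ℂ (Ideal.Quotient.mk (Ideal.torsionOf A M x) a) ⊆ {0} := by
    intro z hz
    obtain ⟨χ, hχ, rfl⟩ := exists_characterSpace_of_mem_spectrum_quotient_mk hz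
    exact h χ hχ
  refine tendsto_rpow_one_div_zero_of_le_const_mul (K := C * ‖x‖) (fun n => norm_nonneg _)
    (fun n => norm_nonneg _) (Eventually.of_forall fun n => ?_)
    (tendsto_norm_pow_rpow_one_div_zero_of_spectrum_subset hspec)
  rw [← map_pow]
  exact norm_smul_le_mul_norm_quotient_mk_torsionOf hC hC₀ x (a ^ n)

end BanachModule

section RegularAlgebra

variable {A : Type*} [NormedCommRing A] [NormedAlgebra ℂ A]
  (hreg : ∀ E : Set (characterSpace ℂ A), IsClosed E →
    ∀ χ : characterSpace ℂ A, χ ∉ E → ∃ b : A, (∀ ψ ∈ E, ψ b = 0) ∧ χ b = 1)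
include hreg

theorem exists_apply_eq_one_forall_mem_closure_apply_ne_zero {a : A}
    {χ : characterSpace ℂ A} (hχ : χ a ≠ 0) :
    ∃ b : A, χ b = 1 ∧ ∀ ψ ∈ closure {ψ : characterSpace ℂ A | ψ b ≠ 0}, ψ a ≠ 0 := by
  have heval : Continuous fun ψ : characterSpace ℂ A => ‖ψ a‖ :=
    ((WeakDual.eval_continuous a).comp continuous_subtype_val).norm
  have hχa : 0 < ‖χ a‖ := norm_pos_iff.mpr hχ
  obtain ⟨b, hbE, hχb⟩ := hreg {ψ | ‖ψ a‖ ≤ ‖χ a‖ / 2} (isClosed_le heval continuous_const) χ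
    (not_le.mpr (half_lt_self hχa))
  refine ⟨b, hχb, fun ψ hψ hψa => ?_⟩
  have hsupp : closure {ψ : characterSpace ℂ A | ψ b ≠ 0} ⊆ {ψ | ‖χ a‖ / 2 ≤ ‖ψ a‖} :=
    closure_minimal
      (fun φ hφ => show ‖χ a‖ / 2 ≤ ‖φ a‖ from not_lt.mp fun hφa => hφ (hbE φ hφa.le))
      (isClosed_le continuous_const heval)
  have hψa' : ‖χ a‖ / 2 ≤ ‖ψ a‖ := hsupp hψ
  rw [hψa, norm_zero] at hψa'
  linarith

variable [CompleteSpace A]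

theorem exists_mul_mul_eq_self_of_forall_mem_closure_apply_ne_zero
    (hss : ∀ b : A, (∀ χ : characterSpace ℂ A, χ b = 0) → b = 0) {a b : A}
    (hab : ∀ ψ ∈ closure {ψ : characterSpace ℂ A | ψ b ≠ 0}, ψ a ≠ 0) :
    ∃ c : A, c * a * b = b := by
  have hJ : Ideal.span {a} ⊔ Ideal.torsionOf A A b = ⊤ := by
    by_contra hJ
    obtain ⟨ψ, hψ⟩ := Ideal.exists_characterSpace_apply_eq_zero_of_ne_top hJ
    have hψa : ψ a = 0 := hψ a (Ideal.mem_sup_left (Ideal.mem_span_singleton_self a))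
    obtain ⟨d, hdS, hψd⟩ := hreg _ isClosed_closure ψ fun hψS => hab ψ hψS hψa
    have hdb : d * b = 0 := hss _ fun φ => by
      rw [map_mul]
      by_cases hφ : φ b = 0
      · rw [hφ, mul_zero]
      · rw [hdS φ (subset_closure hφ), zero_mul]
    rw [hψ d (Ideal.mem_sup_right hdb)] at hψd
    exact zero_ne_one hψd
  obtain ⟨y, hy, z, hz, hyz⟩ := Submodule.mem_sup.mp ((Ideal.eq_top_iff_one _).mp hJ)
  obtain ⟨c, rfl⟩ := Ideal.mem_span_singleton'.mp hy
  refine ⟨c, ?_⟩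
  have hzb : z * b = 0 := hz
  calc c * a * b = (c * a + z) * b := by rw [add_mul, hzb, add_zero]
    _ = b := by rw [hyz, one_mul]

end RegularAlgebra

theorem supp_subset_null_iff_norm_pow_smul_tendsto_zero_general
    {A : Type*} [NormedCommRing A] [NormedAlgebra ℂ A] [CompleteSpace A]
    (hss : ∀ b : A, (∀ χ : characterSpace ℂ A, χ b = 0) → b = 0)
    (hreg : ∀ E : Set (characterSpace ℂ A), IsClosed E →
      ∀ χ : characterSpace ℂ A, χ ∉ E → ∃ b : A, (∀ ψ ∈ E, ψ b = 0) ∧ χ b = 1)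
    {M : Type*} [NormedAddCommGroup M] [Module A M]
    (hM : ∃ C : ℝ, ∀ (b : A) (y : M), ‖b • y‖ ≤ C * ‖b‖ * ‖y‖)
    (x : M) (a : A) :
    {χ : characterSpace ℂ A | ∀ b : A, b • x = 0 → χ b = 0} ⊆
        {χ : characterSpace ℂ A | χ a = 0} ↔
      Tendsto (fun n : ℕ => ‖(a ^ n) • x‖ ^ ((1 : ℝ) / n)) atTop (nhds 0) := by
  obtain ⟨C, hC₀, hC⟩ := exists_nonneg_norm_smul_le hM
  refine ⟨fun hsupp => tendsto_norm_pow_smul_rpow_one_div_zero hC hC₀ hsupp,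
    fun h χ hχ => ?_⟩
  by_contra hχa
  obtain ⟨b, hχb, hb⟩ := exists_apply_eq_one_forall_mem_closure_apply_ne_zero hreg hχa
  obtain ⟨c, hcab⟩ := exists_mul_mul_eq_self_of_forall_mem_closure_apply_ne_zero hreg hss hb
  have hbx : b • x = 0 := smul_eq_zero_of_mul_mul_eq_self hC hC₀ hcab h
  exact one_ne_zero (hχb ▸ hχ b hbx)

/-- For a Banach module `M` over a unital commutative semisimple regular Banach algebra `A`,
an element `x ∈ M` and `a ∈ A`, one has `Supp x ⊆ null a` if and only if
`‖aⁿ • x‖ ^ (1/n) → 0` as `n → ∞`. -/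
theorem supp_subset_null_iff_norm_pow_smul_tendsto_zero
    {A : Type*} [NormedCommRing A] [NormedAlgebra ℂ A] [CompleteSpace A]
    (hss : ∀ b : A, (∀ χ : characterSpace ℂ A, χ b = 0) → b = 0)
    (hreg : ∀ E : Set (characterSpace ℂ A), IsClosed E →
      ∀ χ : characterSpace ℂ A, χ ∉ E → ∃ b : A, (∀ ψ ∈ E, ψ b = 0) ∧ χ b = 1)
    {M : Type*} [NormedAddCommGroup M] [Module A M] [CompleteSpace M]
    (hM : ∃ C : ℝ, ∀ (b : A) (y : M), ‖b • y‖ ≤ C * ‖b‖ * ‖y‖)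
    (x : M) (a : A) :
    {χ : characterSpace ℂ A | ∀ b : A, b • x = 0 → χ b = 0} ⊆
        {χ : characterSpace ℂ A | χ a = 0} ↔
      Tendsto (fun n : ℕ => ‖(a ^ n) • x‖ ^ ((1 : ℝ) / n)) atTop (nhds 0) :=
  supp_subset_null_iff_norm_pow_smul_tendsto_zero_general hss hreg hM x a
end

section
/- Let 𝔛 and 𝔜 be Hausdorff topological vector spaces over ℂ, Φ : 𝔛 → 𝔜 a continuous injective linear map with dense range, and for 1 ≤ i ≤ n let S_i : 𝔛 → 𝔛 and T_i : 𝔜 → 𝔜 be continuous linear maps with T_i ∘ Φ = Φ ∘ S_i. Suppose there is a single net (F_α) of linear maps from 𝔜 to 𝔛 which is an approximate inverse intertwining for each triple (Φ, S_i, T_i). Then for every x ∈ 𝔛: if Φx ∈ Σ_{i=1}^n range(T_i), then x belongs to the closure of Σ_{i=1}^n range(S_i) in 𝔛. -/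
open Filter

/-- A net `F` (indexed by a filter `l`) of linear maps `𝔜 → 𝔛` is an approximate inverse
intertwining (AII) for the intertwining triple `(Φ, S, T)` if `F α (Φ x) → x`,
`Φ (F α y) → y` and `F α (T y) - S (F α y) → 0` along `l`. -/
def IsAII {𝔛 : Type*} [AddCommGroup 𝔛] [Module ℂ 𝔛] [TopologicalSpace 𝔛]
    {𝔜 : Type*} [AddCommGroup 𝔜] [Module ℂ 𝔜] [TopologicalSpace 𝔜]
    {ι : Type*} (l : Filter ι)
    (Φ : 𝔛 →L[ℂ] 𝔜) (S : 𝔛 →L[ℂ] 𝔛) (T : 𝔜 →L[ℂ] 𝔜)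
    (F : ι → (𝔜 →ₗ[ℂ] 𝔛)) : Prop :=
  (∀ x : 𝔛, Tendsto (fun α => F α (Φ x)) l (nhds x)) ∧
  (∀ y : 𝔜, Tendsto (fun α => Φ (F α y)) l (nhds y)) ∧
  (∀ y : 𝔜, Tendsto (fun α => F α (T y) - S (F α y)) l (nhds 0))

/-! Along the net, `F α (Φ x) = ∑ i, F α (T i (v i))` tends to `x`, and each summand is
asymptotically `S i (F α (v i))`, so `x` is a limit of points of `∑ i, range (S i)`. The
convergence `F α (Φ x) → x` is supplied by any one of the AIIs; for an empty family,
injectivity of `Φ` gives `x = 0` instead. -/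

open Topology

section

variable {𝔛 𝔜 ι κ : Type*} [AddCommGroup 𝔛] [Module ℂ 𝔛] [TopologicalSpace 𝔛]
  [IsTopologicalAddGroup 𝔛] [AddCommGroup 𝔜] [Module ℂ 𝔜] [TopologicalSpace 𝔜]
  {l : Filter ι} {Φ : 𝔛 →L[ℂ] 𝔜} {F : ι → 𝔜 →ₗ[ℂ] 𝔛} [Fintype κ]
  {S : κ → 𝔛 →L[ℂ] 𝔛} {T : κ → 𝔜 →L[ℂ] 𝔜}

theorem tendsto_apply_sum_sub_sum_of_common_AII (hF : ∀ i, IsAII l Φ (S i) (T i) F)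
    (v : κ → 𝔜) :
    Tendsto (fun α => F α (∑ i, T i (v i)) - ∑ i, S i (F α (v i))) l (𝓝 0) := by
  simp_rw [map_sum, ← Finset.sum_sub_distrib]
  simpa using tendsto_finsetSum Finset.univ fun i _ => (hF i).2.2 (v i)

theorem tendsto_sum_of_common_AII [Nonempty κ] (hF : ∀ i, IsAII l Φ (S i) (T i) F)
    {x : 𝔛} {v : κ → 𝔜} (hx : Φ x = ∑ i, T i (v i)) :
    Tendsto (fun α => ∑ i, S i (F α (v i))) l (𝓝 x) := by
  obtain ⟨i⟩ := ‹Nonempty κ›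
  have h := ((hF i).1 x).sub (tendsto_apply_sum_sub_sum_of_common_AII hF v)
  rw [hx] at h
  simpa using h

end

theorem mem_closure_sum_ranges_of_common_AII_general
    {𝔛 : Type*} [AddCommGroup 𝔛] [Module ℂ 𝔛] [TopologicalSpace 𝔛]
    [IsTopologicalAddGroup 𝔛]
    {𝔜 : Type*} [AddCommGroup 𝔜] [Module ℂ 𝔜] [TopologicalSpace 𝔜]
    (Φ : 𝔛 →L[ℂ] 𝔜) (hΦinj : Function.Injective Φ)
    (n : ℕ) (S : Fin n → (𝔛 →L[ℂ] 𝔛)) (T : Fin n → (𝔜 →L[ℂ] 𝔜))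
    {ι : Type*} (l : Filter ι) [l.NeBot] (F : ι → (𝔜 →ₗ[ℂ] 𝔛))
    (hF : ∀ i, IsAII l Φ (S i) (T i) F)
    (x : 𝔛) (v : Fin n → 𝔜) (hx : Φ x = ∑ i, T i (v i)) :
    x ∈ closure {z : 𝔛 | ∃ u : Fin n → 𝔛, z = ∑ i, S i (u i)} := by
  cases isEmpty_or_nonempty (Fin n)
  · have hx0 : x = 0 := hΦinj (by simpa using hx)
    exact subset_closure ⟨0, by simp [hx0]⟩
  · exact mem_closure_of_tendsto (tendsto_sum_of_common_AII hF hx)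
      (Eventually.of_forall fun α => ⟨fun i => F α (v i), rfl⟩)

/-- If the intertwinings `(Φ, Sᵢ, Tᵢ)`, `1 ≤ i ≤ n`, have a common approximate inverse
intertwining, then `Φ⁻¹(∑ᵢ Im Tᵢ) ⊆ closure (∑ᵢ Im Sᵢ)`. -/
theorem mem_closure_sum_ranges_of_common_AII
    {𝔛 : Type*} [AddCommGroup 𝔛] [Module ℂ 𝔛] [TopologicalSpace 𝔛]
    [IsTopologicalAddGroup 𝔛] [ContinuousSMul ℂ 𝔛] [T2Space 𝔛]
    {𝔜 : Type*} [AddCommGroup 𝔜] [Module ℂ 𝔜] [TopologicalSpace 𝔜]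
    [IsTopologicalAddGroup 𝔜] [ContinuousSMul ℂ 𝔜] [T2Space 𝔜]
    (Φ : 𝔛 →L[ℂ] 𝔜) (hΦinj : Function.Injective Φ) (hΦdr : DenseRange Φ)
    (n : ℕ) (S : Fin n → (𝔛 →L[ℂ] 𝔛)) (T : Fin n → (𝔜 →L[ℂ] 𝔜))
    (hint : ∀ i x, T i (Φ x) = Φ (S i x))
    {ι : Type*} (l : Filter ι) [l.NeBot] (F : ι → (𝔜 →ₗ[ℂ] 𝔛))
    (hF : ∀ i, IsAII l Φ (S i) (T i) F)
    (x : 𝔛) (v : Fin n → 𝔜) (hx : Φ x = ∑ i, T i (v i)) :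
    x ∈ closure {z : 𝔛 | ∃ u : Fin n → 𝔛, z = ∑ i, S i (u i)} :=
  mem_closure_sum_ranges_of_common_AII_general Φ hΦinj n S T l F hF x v hx
end

section
/- Let H be a complex Hilbert space, 𝔜 a Hausdorff topological vector space over ℂ, and Φ : H → 𝔜 a continuous injective linear map with dense range. Let S be a bounded normal operator on H, and let T_1, T_2 be continuous linear operators on 𝔜 such that T_1 ∘ Φ = Φ ∘ S and T_2 ∘ Φ = Φ ∘ S*. Assume ker S ∩ cl(Φ⁻¹(T_2(𝔜))) = {0}, where Φ⁻¹(M) = {x ∈ H : Φx ∈ M} and cl denotes norm closure in H. Then for every y ∈ 𝔜 such that T_1 y = Φ x_1 and T_2 y = Φ x_2 for some x_1, x_2 ∈ H, one has ‖x_2‖ ≤ ‖x_1‖. -/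
/-!
Normality of `S` makes `T₁` and `T₂` commute on the dense range of `Φ`, hence everywhere, and
then `Φ (S x₂) = T₁ T₂ y = T₂ T₁ y = Φ (S* x₁)` gives `S x₂ = S* x₁`. As `ker S = (ran S*)ᗮ`,
the hypothesis on `ker S` forces `closure (Φ⁻¹ (T₂ 𝔜)) = closure (ran S*)`, so `x₂` lies in
`closure (ran S*)`. On `ran S*`, `|⟪x₂, S* v⟫| = |⟪x₁, S v⟫| ≤ ‖x₁‖ ‖S v‖ = ‖x₁‖ ‖S* v‖`; this
estimate passes to the closure, and at `x₂` itself it reads `‖x₂‖² ≤ ‖x₁‖ ‖x₂‖`.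
-/

open ContinuousLinearMap Function

theorem DenseRange.commute_of_semiconj {X Y : Type*} [TopologicalSpace Y] [T2Space Y]
    {Φ : X → Y} (hΦ : DenseRange Φ) {a b : X → X} {f g : Y → Y}
    (hf : Continuous f) (hg : Continuous g) (ha : Semiconj Φ a f) (hb : Semiconj Φ b g)
    (hab : Function.Commute a b) : Function.Commute f g :=
  congrFun <| hΦ.equalizer (hf.comp hg) (hg.comp hf) <| calc
    f ∘ g ∘ Φ = Φ ∘ (a ∘ b) := ((ha.comp_right hb).comp_eq).symm
    _ = Φ ∘ (b ∘ a) := congrArg (Φ ∘ ·) (funext hab)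
    _ = g ∘ f ∘ Φ := (hb.comp_right ha).comp_eq

section Adjoint

variable {𝕜 E F : Type*} [RCLike 𝕜]
  [NormedAddCommGroup E] [InnerProductSpace 𝕜 E] [CompleteSpace E]
  [NormedAddCommGroup F] [InnerProductSpace 𝕜 F] [CompleteSpace F]

theorem codisjoint_topologicalClosure_range_adjoint_ker (S : E →L[𝕜] F) :
    Codisjoint (adjoint S).range.topologicalClosure S.ker := by
  have h := (Submodule.isCompl_orthogonal (adjoint S).range.topologicalClosure)
  rw [Submodule.orthogonal_closure, orthogonal_range, adjoint_adjoint] at h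
  exact h.codisjoint

end Adjoint

section Normal

variable {𝕜 E : Type*} [RCLike 𝕜] [NormedAddCommGroup E] [InnerProductSpace 𝕜 E]
  [CompleteSpace E] {S : E →L[𝕜] E}

theorem IsStarNormal.norm_inner_le_of_apply_eq_adjoint_apply (hS : IsStarNormal S)
    {x₁ x₂ : E} (hx : S x₂ = adjoint S x₁) {u : E}
    (hu : u ∈ (adjoint S).range.topologicalClosure) :
    ‖(inner 𝕜 x₂ u : 𝕜)‖ ≤ ‖x₁‖ * ‖u‖ := by
  have hclosed : IsClosed {u : E | ‖(inner 𝕜 x₂ u : 𝕜)‖ ≤ ‖x₁‖ * ‖u‖} :=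
    isClosed_le (by fun_prop) (by fun_prop)
  refine closure_minimal ?_ hclosed hu
  rintro _ ⟨v, rfl⟩
  calc ‖(inner 𝕜 x₂ (adjoint S v) : 𝕜)‖ = ‖(inner 𝕜 x₁ (S v) : 𝕜)‖ := by
        rw [adjoint_inner_right, hx, adjoint_inner_left]
    _ ≤ ‖x₁‖ * ‖S v‖ := norm_inner_le_norm x₁ (S v)
    _ = ‖x₁‖ * ‖adjoint S v‖ := by rw [isStarNormal_iff_norm_eq_adjoint.mp hS v]

theorem IsStarNormal.norm_le_of_apply_eq_adjoint_apply (hS : IsStarNormal S)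
    {x₁ x₂ : E} (hx : S x₂ = adjoint S x₁)
    (hx₂ : x₂ ∈ (adjoint S).range.topologicalClosure) : ‖x₂‖ ≤ ‖x₁‖ := by
  have h := hS.norm_inner_le_of_apply_eq_adjoint_apply hx hx₂
  rw [inner_self_eq_norm_sq_to_K, norm_pow, RCLike.norm_ofReal, abs_norm, sq] at h
  nlinarith [norm_nonneg x₁, norm_nonneg x₂]

end Normal

theorem norm_le_of_intertwining_normal_general
    {H : Type*} [NormedAddCommGroup H] [InnerProductSpace ℂ H] [CompleteSpace H]
    {𝔜 : Type*} [AddCommGroup 𝔜] [Module ℂ 𝔜] [TopologicalSpace 𝔜] [T2Space 𝔜]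
    (Φ : H →L[ℂ] 𝔜) (hΦinj : Function.Injective Φ) (hΦdr : DenseRange Φ)
    (S : H →L[ℂ] H) (hS : adjoint S ∘L S = S ∘L adjoint S)
    (T₁ T₂ : 𝔜 →L[ℂ] 𝔜)
    (h₁ : ∀ x, T₁ (Φ x) = Φ (S x))
    (h₂ : ∀ x, T₂ (Φ x) = Φ (adjoint S x))
    (hker : ∀ x : H, S x = 0 → x ∈ closure (⇑Φ ⁻¹' Set.range T₂) → x = 0)
    (y : 𝔜) (x₁ x₂ : H) (hx₁ : T₁ y = Φ x₁) (hx₂ : T₂ y = Φ x₂) :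
    ‖x₂‖ ≤ ‖x₁‖ := by
  have hnormal : IsStarNormal S := ⟨hS⟩
  have hT : Function.Commute T₁ T₂ :=
    hΦdr.commute_of_semiconj T₁.continuous T₂.continuous (fun x ↦ (h₁ x).symm)
      (fun x ↦ (h₂ x).symm) (DFunLike.congr_fun hS.symm)
  have hx : S x₂ = adjoint S x₁ := hΦinj <| by rw [← h₁, ← h₂, ← hx₁, ← hx₂, hT y]
  set K := (T₂.range.comap (Φ : H →ₗ[ℂ] 𝔜)).topologicalClosure
  have hrange : (adjoint S).range.topologicalClosure = K := by
    refine (le_iff_eq_of_codisjoint_of_disjoint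
      (codisjoint_topologicalClosure_range_adjoint_ker S)
      (Submodule.disjoint_def.mpr fun x hSx hxK ↦ hker x hSx hxK)).mp ?_
    refine Submodule.topologicalClosure_mono ?_
    rintro _ ⟨x, rfl⟩
    exact ⟨Φ x, h₂ x⟩
  exact hnormal.norm_le_of_apply_eq_adjoint_apply hx (hrange ▸ subset_closure ⟨y, hx₂⟩)

/-- Let `Φ : H → 𝔜` be a continuous injective linear map with dense range from a Hilbert
space `H`, intertwining a normal operator `S` with `T₁` and its adjoint `S*` with `T₂`.
If `ker S ∩ closure (Φ⁻¹ (T₂ 𝔜)) = {0}`, then whenever `T₁ y = Φ x₁` and `T₂ y = Φ x₂`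
one has `‖x₂‖ ≤ ‖x₁‖`. -/
theorem norm_le_of_intertwining_normal
    {H : Type*} [NormedAddCommGroup H] [InnerProductSpace ℂ H] [CompleteSpace H]
    {𝔜 : Type*} [AddCommGroup 𝔜] [Module ℂ 𝔜] [TopologicalSpace 𝔜]
    [IsTopologicalAddGroup 𝔜] [ContinuousSMul ℂ 𝔜] [T2Space 𝔜]
    (Φ : H →L[ℂ] 𝔜) (hΦinj : Function.Injective Φ) (hΦdr : DenseRange Φ)
    (S : H →L[ℂ] H) (hS : adjoint S ∘L S = S ∘L adjoint S)
    (T₁ T₂ : 𝔜 →L[ℂ] 𝔜)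
    (h₁ : ∀ x, T₁ (Φ x) = Φ (S x))
    (h₂ : ∀ x, T₂ (Φ x) = Φ (adjoint S x))
    (hker : ∀ x : H, S x = 0 → x ∈ closure (⇑Φ ⁻¹' Set.range T₂) → x = 0)
    (y : 𝔜) (x₁ x₂ : H) (hx₁ : T₁ y = Φ x₁) (hx₂ : T₂ y = Φ x₂) :
    ‖x₂‖ ≤ ‖x₁‖ :=
  norm_le_of_intertwining_normal_general Φ hΦinj hΦdr S hS T₁ T₂ h₁ h₂ hker y x₁ x₂ hx₁ hx₂
end

section
/- Let n ∈ ℕ and let f_1, …, f_n : [0,1] → ℂ be Hölder continuous with exponent 1/2. Then there do not exist functions F_1, …, F_n ∈ L²([0,1]², Lebesgue measure) such that Σ_{k=1}^n (f_k(x) − f_k(y)) F_k(x,y) = 1 for Lebesgue-almost every (x,y) ∈ [0,1]². -/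
/-!
On the strip `|x - y| ≤ δ` of the unit square every coefficient `f k x - f k y` is `O(δ^{1/2})`,
so the identity `∑ (f k x - f k y) F k = 1` forces `1 ≤ δ^{1/2} ∑ C k |F k|` there. Taking
`L²` norms over the strip, whose measure is at least `δ`, gives `1 ≤ ∑ C k ‖F k‖_{L²(strip)}`.
But the strips shrink to the diagonal, a null set, so by absolute continuity of the integral
the right-hand side tends to `0`.
-/

open MeasureTheory Filter Set
open scoped ENNReal NNReal Topology

section Measure

variable {α : Type*} [MeasurableSpace α] {μ : Measure α}

theorem MeasureTheory.MemLp.tendsto_eLpNorm_restrict_zero {E : Type*} [NormedAddCommGroup E]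
    {p : ℝ≥0∞} {f : α → E} (hf : MemLp f p μ) (hp : p ≠ ∞) {ι : Type*} {l : Filter ι}
    {s : ι → Set α} (hs : Tendsto (μ ∘ s) l (𝓝 0)) :
    Tendsto (fun i ↦ eLpNorm f p (μ.restrict (s i))) l (𝓝 0) := by
  rcases eq_or_ne p 0 with rfl | hp0
  · simpa using tendsto_const_nhds
  simp_rw [eLpNorm_eq_lintegral_rpow_enorm_toReal hp0 hp]
  have hint := (lintegral_rpow_enorm_lt_top_of_eLpNorm_lt_top hp0 hp hf.2).ne
  have hpos : 0 < 1 / p.toReal := by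
    have := ENNReal.toReal_pos hp0 hp
    positivity
  simpa only [ENNReal.zero_rpow_of_pos hpos] using
    (tendsto_setLIntegral_zero hint hs).ennrpow_const (1 / p.toReal)

theorem MeasureTheory.measure_univ_rpow_le_sum_mul_eLpNorm {ι R : Type*} [Fintype ι]
    [NormedRing R] [NormOneClass R] {p : ℝ≥0∞} (hp1 : 1 ≤ p) (hp : p ≠ ∞) {g F : ι → α → R}
    {c : ι → ℝ≥0} (hF : ∀ i, AEStronglyMeasurable (F i) μ) (hg : ∀ i, ∀ᵐ x ∂μ, ‖g i x‖ ≤ c i)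
    (hsum : ∀ᵐ x ∂μ, ∑ i, g i x * F i x = 1) :
    μ univ ^ (1 / p.toReal) ≤ ∑ i, c i * eLpNorm (F i) p μ := by
  have hpt : ∀ᵐ x ∂μ, ‖(1 : ℝ)‖ ≤ ∑ i, (c i : ℝ) * ‖F i x‖ := by
    filter_upwards [hsum, ae_all_iff.2 hg] with x hx hgx
    calc ‖(1 : ℝ)‖ = ‖∑ i, g i x * F i x‖ := by simp [hx]
      _ ≤ ∑ i, ‖g i x‖ * ‖F i x‖ := norm_sum_le_of_le _ fun i _ ↦ norm_mul_le _ _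
      _ ≤ ∑ i, (c i : ℝ) * ‖F i x‖ := by gcongr with i; exact hgx i
  calc μ univ ^ (1 / p.toReal) = eLpNorm (fun _ ↦ (1 : ℝ)) p μ := by
        simp [eLpNorm_const' _ (zero_lt_one.trans_le hp1).ne' hp]
    _ ≤ eLpNorm (∑ i, fun x ↦ (c i : ℝ) • ‖F i x‖) p μ := by
        refine eLpNorm_mono_ae_real ?_
        simpa using hpt
    _ ≤ ∑ i, eLpNorm (fun x ↦ (c i : ℝ) • ‖F i x‖) p μ :=
        eLpNorm_sum_le (fun i _ ↦ ((hF i).norm.const_smul (c i : ℝ))) hp1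
    _ = ∑ i, c i * eLpNorm (F i) p μ := by
        refine Finset.sum_congr rfl fun i _ ↦ ?_
        rw [show (fun x ↦ (c i : ℝ) • ‖F i x‖) = (c i : ℝ) • fun x ↦ ‖F i x‖ from rfl,
          eLpNorm_const_smul, eLpNorm_norm]
        simp

theorem MeasureTheory.Measure.prod_diagonal_eq_zero [MeasurableEq α] (ν : Measure α) [SFinite ν]
    [NullSingletonClass ν] : μ.prod ν (diagonal α) = 0 := by
  rw [Measure.prod_apply measurableSet_diagonal]
  simp [preimage, diagonal]

end Measure

notation "μ□" => Measure.prod (volume.restrict (Icc (0 : ℝ) 1)) (volume.restrict (Icc (0 : ℝ) 1))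

def diagStrip (δ : ℝ) : Set (ℝ × ℝ) := {q | |q.1 - q.2| ≤ δ}

theorem measurableSet_diagStrip (δ : ℝ) : MeasurableSet (diagStrip δ) :=
  (isClosed_le (by fun_prop) continuous_const).measurableSet

theorem diagStrip_mono : Monotone diagStrip := fun _ _ h _ hq ↦ le_trans hq h

theorem biInter_diagStrip : ⋂ δ > 0, diagStrip δ = diagonal ℝ := by
  ext q
  simp only [diagStrip, mem_iInter, mem_ofPred_eq, mem_diagonal_iff]
  refine ⟨fun h ↦ ?_, fun h δ hδ ↦ by simp [h, hδ.le]⟩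
  exact sub_eq_zero.1 (abs_nonpos_iff.1 (le_of_forall_gt_imp_ge_of_dense h))

theorem tendsto_measure_diagStrip :
    Tendsto (fun δ ↦ μ□ (diagStrip δ)) (𝓝[>] 0) (𝓝 0) := by
  have h := tendsto_measure_biInter_gt (μ := μ□) (a := (0 : ℝ))
    (fun δ _ ↦ (measurableSet_diagStrip δ).nullMeasurableSet)
    (fun _ _ _ h ↦ diagStrip_mono h) ⟨1, one_pos, measure_ne_top _ _⟩
  rwa [biInter_diagStrip, Measure.prod_diagonal_eq_zero] at h

theorem ofReal_le_measure_diagStrip {δ : ℝ} (hδ : δ ≤ 1) :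
    ENNReal.ofReal δ ≤ μ□ (diagStrip δ) := by
  rw [Measure.prod_apply (measurableSet_diagStrip δ)]
  have hslice : ∀ x ∈ Icc (0 : ℝ) 1,
      ENNReal.ofReal δ ≤ volume.restrict (Icc (0 : ℝ) 1) (Prod.mk x ⁻¹' diagStrip δ) := by
    rintro x ⟨hx0, hx1⟩
    -- an interval of length `δ` inside `[0,1]` within distance `δ` of `x`
    have hsub : Icc (min x (1 - δ)) (min x (1 - δ) + δ) ⊆
        Prod.mk x ⁻¹' diagStrip δ ∩ Icc 0 1 := by
      rintro y ⟨hy1, hy2⟩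
      simp only [diagStrip, mem_inter_iff, mem_preimage, mem_ofPred_eq, mem_Icc, abs_le]
      rcases min_cases x (1 - δ) with ⟨h, _⟩ | ⟨h, _⟩ <;> rw [h] at hy1 hy2 <;>
        refine ⟨⟨?_, ?_⟩, ?_, ?_⟩ <;> linarith
    calc ENNReal.ofReal δ = volume (Icc (min x (1 - δ)) (min x (1 - δ) + δ)) := by simp
      _ ≤ _ := by
        rw [Measure.restrict_apply (measurable_prodMk_left (measurableSet_diagStrip δ))]
        exact measure_mono hsub
  calc ENNReal.ofReal δ = ∫⁻ _, ENNReal.ofReal δ ∂volume.restrict (Icc (0 : ℝ) 1) := by simp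
    _ ≤ _ := lintegral_mono_ae ((ae_restrict_mem measurableSet_Icc).mono hslice)

theorem one_le_sum_mul_eLpNorm_restrict_diagStrip {ι : Type*} [Fintype ι] {f : ι → ℝ → ℂ}
    {C : ι → ℝ} {α : ℝ} {p : ℝ≥0∞} (hp1 : 1 ≤ p) (hp : p ≠ ∞) (hαp : 1 / p.toReal ≤ α)
    (hf : ∀ k, ∀ x ∈ Icc (0 : ℝ) 1, ∀ y ∈ Icc (0 : ℝ) 1, ‖f k x - f k y‖ ≤ C k * |x - y| ^ α)
    {F : ι → ℝ × ℝ → ℂ} (hF : ∀ k, AEStronglyMeasurable (F k) μ□)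
    (hsum : ∀ᵐ q ∂μ□, ∑ k, (f k q.1 - f k q.2) * F k q = 1) {δ : ℝ} (hδ0 : 0 < δ)
    (hδ1 : δ ≤ 1) :
    1 ≤ ∑ k, ENNReal.ofReal (C k) * eLpNorm (F k) p (μ□.restrict (diagStrip δ)) := by
  have hα : 0 ≤ α := le_trans (by positivity) hαp
  have hmem : ∀ᵐ q ∂μ□.restrict (diagStrip δ), q ∈ Icc (0 : ℝ) 1 ×ˢ Icc (0 : ℝ) 1 := by
    refine ae_restrict_of_ae ?_
    rw [Measure.prod_restrict]
    exact ae_restrict_mem (measurableSet_Icc.prod measurableSet_Icc)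
  have hg : ∀ k, ∀ᵐ q ∂μ□.restrict (diagStrip δ),
      ‖f k q.1 - f k q.2‖ ≤ ((C k).toNNReal * (δ ^ α).toNNReal : ℝ≥0) := by
    intro k
    filter_upwards [hmem, ae_restrict_mem (measurableSet_diagStrip δ)] with q ⟨hq1, hq2⟩ hqδ
    calc ‖f k q.1 - f k q.2‖ ≤ C k * |q.1 - q.2| ^ α := hf k _ hq1 _ hq2
      _ ≤ (C k).toNNReal * δ ^ α := by
        gcongr
        · exact Real.le_coe_toNNReal _
        · exact hqδ
      _ = ((C k).toNNReal * (δ ^ α).toNNReal : ℝ≥0) := by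
        rw [NNReal.coe_mul, Real.coe_toNNReal (δ ^ α) (by positivity)]
  have hbound := measure_univ_rpow_le_sum_mul_eLpNorm hp1 hp (fun k ↦ (hF k).restrict) hg
    (ae_restrict_of_ae hsum)
  rw [Measure.restrict_apply_univ] at hbound
  set S := ∑ k, ENNReal.ofReal (C k) * eLpNorm (F k) p (μ□.restrict (diagStrip δ))
  have hd0 : ENNReal.ofReal δ ^ (1 / p.toReal) ≠ 0 := by positivity
  have hdtop : ENNReal.ofReal δ ^ (1 / p.toReal) ≠ ∞ := by simp [ENNReal.rpow_eq_top_iff]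
  refine (ENNReal.mul_le_mul_iff_right hd0 hdtop).1 ?_
  calc ENNReal.ofReal δ ^ (1 / p.toReal) * 1
      ≤ μ□ (diagStrip δ) ^ (1 / p.toReal) := by
        rw [mul_one]
        gcongr
        exact ofReal_le_measure_diagStrip hδ1
    _ ≤ _ := hbound
    _ = ENNReal.ofReal δ ^ α * S := by
        rw [Finset.mul_sum]
        refine Finset.sum_congr rfl fun k _ ↦ ?_
        rw [ENNReal.coe_mul, ENNReal.ofReal_rpow_of_pos hδ0]
        change ENNReal.ofReal (C k) * ENNReal.ofReal (δ ^ α) * _ = _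
        ring
    _ ≤ ENNReal.ofReal δ ^ (1 / p.toReal) * S := by
        gcongr ?_ * S
        exact ENNReal.rpow_le_rpow_of_exponent_ge (ENNReal.ofReal_le_one.2 hδ1) hαp

/-- If `f₁, …, fₙ : [0,1] → ℂ` are Hölder continuous with exponent `1/2`, then there are no
`F₁, …, Fₙ ∈ L²([0,1]²)` with `∑ k (f k x - f k y) * F k (x,y) = 1` almost everywhere. -/
theorem no_L2_solution_of_lipHalf
    (n : ℕ) (f : Fin n → ℝ → ℂ)
    (hf : ∀ k, ∃ C : ℝ, ∀ x ∈ Set.Icc (0 : ℝ) 1, ∀ y ∈ Set.Icc (0 : ℝ) 1,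
      ‖f k x - f k y‖ ≤ C * |x - y| ^ ((1 : ℝ) / 2)) :
    ¬ ∃ F : Fin n → ℝ × ℝ → ℂ,
      (∀ k, MemLp (F k) 2
        ((volume.restrict (Set.Icc (0 : ℝ) 1)).prod (volume.restrict (Set.Icc (0 : ℝ) 1)))) ∧
      (∀ᵐ p ∂((volume.restrict (Set.Icc (0 : ℝ) 1)).prod
          (volume.restrict (Set.Icc (0 : ℝ) 1))),
        ∑ k, (f k p.1 - f k p.2) * F k p = 1) := by
  rintro ⟨F, hF, hsum⟩
  choose C hC using hf
  have hsmall : Tendsto (fun δ ↦ ∑ k, ENNReal.ofReal (C k) *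
      eLpNorm (F k) 2 (μ□.restrict (diagStrip δ))) (𝓝[>] 0) (𝓝 0) := by
    simpa using tendsto_finsetSum Finset.univ fun k _ ↦ ENNReal.Tendsto.const_mul
      ((hF k).tendsto_eLpNorm_restrict_zero ENNReal.ofNat_ne_top tendsto_measure_diagStrip)
      (Or.inr ENNReal.ofReal_ne_top)
  obtain ⟨δ, hδ, hδ0, hδ1⟩ :=
    ((hsmall.eventually_lt_const one_pos).and (Ioc_mem_nhdsGT one_pos)).exists
  exact (one_le_sum_mul_eLpNorm_restrict_diagStrip one_le_two ENNReal.ofNat_ne_top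
    (by norm_num) hC (fun k ↦ (hF k).1) hsum hδ0 hδ1).not_gt hδ
end

section
/- There exist functions f_1, f_2 : [0,1] → ℂ that are Hölder continuous with exponent 1/3 and functions F_1, F_2 ∈ L²([0,1]², Lebesgue measure) such that (f_1(x) − f_1(y)) F_1(x,y) + (f_2(x) − f_2(y)) F_2(x,y) = 1 for Lebesgue-almost every (x,y) ∈ [0,1]². -/
open MeasureTheory Set Filter Topology ComplexConjugate
open scoped ENNReal NNReal

/-!
Let `γ : ℝ → [0,1]³` be a three-dimensional Hilbert curve: the attractor of eight similarities
of ratio `1/2` of the unit cube, chained so that the exit point of each piece is the entry point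
of the next. Self-similarity makes `γ` Hölder of exponent `1/3`, and since the `8^k` pieces of
level `k` fill distinct dyadic cubes of side `2^-k`, the time `γ` spends in a ball of radius
`2^-k` is `O(8^-k)`. Hence `∫ |γ(y) - z|⁻² dy` is bounded uniformly in `z`, so
`∬ |γ(x) - γ(y)|⁻² dx dy < ∞`. With `f₁ = γ₁ + iγ₂` and `f₂ = γ₃`, the functions
`Fⱼ(x, y) = conj (fⱼ x - fⱼ y) / |γ x - γ y|²` solve the equation and are square integrable.
-/

section Bezout

variable {β 𝕜 : Type*} [MeasurableSpace β] [RCLike 𝕜] {ν : Measure β}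

lemma RCLike.mul_smul_conj_add_mul_smul_conj {a b : 𝕜} (h : 0 < ‖a‖ ^ 2 + ‖b‖ ^ 2) :
    a * ((‖a‖ ^ 2 + ‖b‖ ^ 2)⁻¹ • conj a) + b * ((‖a‖ ^ 2 + ‖b‖ ^ 2)⁻¹ • conj b) = 1 := by
  simp only [RCLike.real_smul_eq_coe_mul, mul_left_comm a, mul_left_comm b, RCLike.mul_conj,
    ← mul_add]
  exact_mod_cast inv_mul_cancel₀ h.ne'

lemma RCLike.sq_norm_inv_smul_conj_le {a : 𝕜} {s : ℝ} (h : ‖a‖ ^ 2 ≤ s) :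
    ‖s⁻¹ • conj a‖ ^ 2 ≤ s⁻¹ := by
  rcases (sq_nonneg _ |>.trans h).eq_or_lt with rfl | hs
  · simp
  rw [norm_smul, RCLike.norm_conj, mul_pow, norm_inv, Real.norm_of_nonneg hs.le]
  calc s⁻¹ ^ 2 * ‖a‖ ^ 2 ≤ s⁻¹ ^ 2 * s := by gcongr
    _ = s⁻¹ := by field_simp

theorem exists_memLp_two_bezout {u₁ u₂ : β → 𝕜}
    (hu₁ : AEStronglyMeasurable u₁ ν) (hu₂ : AEStronglyMeasurable u₂ ν)
    (hint : ∫⁻ p, (ENNReal.ofReal (‖u₁ p‖ ^ 2 + ‖u₂ p‖ ^ 2))⁻¹ ∂ν ≠ ∞) :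
    ∃ F₁ F₂ : β → 𝕜, MemLp F₁ 2 ν ∧ MemLp F₂ 2 ν ∧
      ∀ᵐ p ∂ν, u₁ p * F₁ p + u₂ p * F₂ p = 1 := by
  set S : β → ℝ := fun p => ‖u₁ p‖ ^ 2 + ‖u₂ p‖ ^ 2
  have hS : AEStronglyMeasurable S ν := (hu₁.norm.pow 2).add (hu₂.norm.pow 2)
  have memLp {u : β → 𝕜} (hu : AEStronglyMeasurable u ν) (hle : ∀ p, ‖u p‖ ^ 2 ≤ S p) :
      MemLp (fun p => (S p)⁻¹ • conj (u p)) 2 ν := by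
    refine ⟨hS.aemeasurable.inv.aestronglyMeasurable.smul
      (RCLike.continuous_conj.comp_aestronglyMeasurable hu), ?_⟩
    rw [eLpNorm_lt_top_iff_lintegral_rpow_enorm_lt_top two_ne_zero ENNReal.ofNat_ne_top]
    refine lt_of_le_of_lt (lintegral_mono fun p => ?_) hint.lt_top
    rw [ENNReal.toReal_ofNat, ENNReal.rpow_two, ← ofReal_norm, ← ENNReal.ofReal_pow (norm_nonneg _)]
    exact (ENNReal.ofReal_le_ofReal (RCLike.sq_norm_inv_smul_conj_le (hle p))).trans
      ENNReal.ofReal_inv_le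
  refine ⟨_, _, memLp hu₁ fun p => le_add_of_nonneg_right (by positivity),
    memLp hu₂ fun p => le_add_of_nonneg_left (by positivity), ?_⟩
  -- `(ofReal 0)⁻¹ = ∞`, so `hint` forces `S > 0` almost everywhere.
  filter_upwards [ae_lt_top' (ENNReal.measurable_ofReal.comp_aemeasurable hS.aemeasurable).inv
      hint] with p hp
  exact RCLike.mul_smul_conj_add_mul_smul_conj (by simpa using hp)

end Bezout

namespace ENNReal

lemma exists_inv_two_pow_near {t : ℝ≥0∞} (h0 : t ≠ 0) (h1 : t ≤ 1) :
    ∃ k : ℕ, 2⁻¹ ^ (k + 1) < t ∧ t ≤ 2⁻¹ ^ k := by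
  lift t to ℝ≥0 using ne_top_of_le_ne_top one_ne_top h1
  obtain ⟨k, hk, hk'⟩ := exists_nat_pow_near_of_lt_one (pos_iff_ne_zero.2 (by exact_mod_cast h0))
    (by exact_mod_cast h1) (by norm_num : (0 : ℝ≥0) < 2⁻¹) (by norm_num)
  refine ⟨k, ?_, ?_⟩
  · have := ENNReal.coe_lt_coe.2 hk
    rwa [ENNReal.coe_pow, ENNReal.coe_inv two_ne_zero, ENNReal.coe_ofNat] at this
  · have := ENNReal.coe_le_coe.2 hk'
    rwa [ENNReal.coe_pow, ENNReal.coe_inv two_ne_zero, ENNReal.coe_ofNat] at this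

lemma inv_sq_le_one_add_tsum_indicator (t : ℝ≥0∞) :
    (t ^ 2)⁻¹ ≤ 1 + ∑' k : ℕ, {s : ℝ≥0∞ | s ≤ 2⁻¹ ^ k}.indicator (fun _ => 4 ^ (k + 1)) t := by
  rcases eq_or_ne t 0 with rfl | ht0
  · calc _ ≤ ∞ := le_top
      _ = ∑' _ : ℕ, (1 : ℝ≥0∞) := (tsum_const_eq_top_of_ne_zero one_ne_zero).symm
      _ ≤ _ := ENNReal.tsum_le_tsum fun k => by simp [one_le_pow₀]
      _ ≤ _ := le_add_self
  rcases lt_or_ge 1 t with ht1 | ht1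
  · exact le_add_right (ENNReal.inv_le_one.2 (one_le_pow₀ ht1.le))
  obtain ⟨k, hk, hk'⟩ := exists_inv_two_pow_near ht0 ht1
  calc (t ^ 2)⁻¹ ≤ ((2⁻¹ ^ (k + 1)) ^ 2)⁻¹ := by gcongr
    _ = 4 ^ (k + 1) := by
      rw [← pow_mul, ENNReal.inv_pow, inv_inv, mul_comm, pow_mul]; norm_num
    _ = {s : ℝ≥0∞ | s ≤ 2⁻¹ ^ k}.indicator (fun _ => 4 ^ (k + 1)) t :=
      (indicator_of_mem (s := {s : ℝ≥0∞ | s ≤ 2⁻¹ ^ k}) hk' fun _ => (4 : ℝ≥0∞) ^ (k + 1)).symm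
    _ ≤ _ := ENNReal.le_tsum k
    _ ≤ _ := le_add_self

end ENNReal

theorem lintegral_inv_edist_sq_le {α X : Type*} [MeasurableSpace α] [PseudoEMetricSpace X]
    {μ : Measure α} {g : α → X} {z : X} {C : ℝ≥0∞}
    (hg : Measurable fun y => edist (g y) z)
    (hC : ∀ k : ℕ, μ {y | edist (g y) z ≤ 2⁻¹ ^ k} ≤ C * 8⁻¹ ^ k) :
    ∫⁻ y, (edist (g y) z ^ 2)⁻¹ ∂μ ≤ μ univ + 8 * C := by
  have hA (k : ℕ) : MeasurableSet {y | edist (g y) z ≤ 2⁻¹ ^ k} :=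
    measurableSet_le hg measurable_const
  calc ∫⁻ y, (edist (g y) z ^ 2)⁻¹ ∂μ
      ≤ ∫⁻ y, 1 + ∑' k : ℕ, {y | edist (g y) z ≤ 2⁻¹ ^ k}.indicator (fun _ => 4 ^ (k + 1)) y ∂μ :=
        lintegral_mono fun y => ENNReal.inv_sq_le_one_add_tsum_indicator _
    _ = μ univ + ∑' k : ℕ, 4 ^ (k + 1) * μ {y | edist (g y) z ≤ 2⁻¹ ^ k} := by
        rw [lintegral_add_left measurable_const, lintegral_one, lintegral_tsum fun k =>
          (measurable_const.indicator (hA k)).aemeasurable]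
        simp_rw [lintegral_indicator_const (hA _)]
    _ ≤ μ univ + ∑' k : ℕ, 4 * C * 2⁻¹ ^ k := by
        refine add_le_add le_rfl (ENNReal.tsum_le_tsum fun k => ?_)
        calc _ ≤ 4 ^ (k + 1) * (C * 8⁻¹ ^ k) := by gcongr; exact hC k
          _ = 4 * C * (4 * 8⁻¹) ^ k := by ring
          _ = 4 * C * 2⁻¹ ^ k := by
            rw [show (8 : ℝ≥0∞) = 2 * 4 by norm_num, ENNReal.mul_inv (by simp) (by simp),
              mul_left_comm, ENNReal.mul_inv_cancel (by simp) (by simp), mul_one]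
    _ = μ univ + 8 * C := by
        rw [ENNReal.tsum_mul_left, ENNReal.tsum_geometric, ENNReal.one_sub_inv_two, inv_inv]
        ring

theorem HolderWith.of_nndist_le_pow {X Y : Type*} [MetricSpace X] [PseudoMetricSpace Y]
    {f : X → Y} {C r a b : ℝ≥0} (ha₀ : 0 < a) (ha₁ : a < 1) (hab : a ^ (r : ℝ) = b)
    (hbdd : ∀ x y, nndist (f x) (f y) ≤ C)
    (hf : ∀ (k : ℕ) x y, nndist x y ≤ a ^ k → nndist (f x) (f y) ≤ C * b ^ k) :
    HolderWith (C * b⁻¹) r f := by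
  have hb₀ : 0 < b := hab ▸ NNReal.rpow_pos ha₀
  have hb₁ : b ≤ 1 := hab ▸ NNReal.rpow_le_one ha₁.le r.coe_nonneg
  suffices h : ∀ x y, nndist (f x) (f y) ≤ C * b⁻¹ * nndist x y ^ (r : ℝ) by
    intro x y
    rw [edist_nndist, edist_nndist, ← ENNReal.coe_rpow_of_nonneg _ r.coe_nonneg,
      ← ENNReal.coe_mul, ENNReal.coe_le_coe]
    exact h x y
  intro x y
  rcases eq_or_ne x y with rfl | hxy
  · simp
  rcases lt_or_ge 1 (nndist x y) with hd | hd
  · calc nndist (f x) (f y) ≤ C * 1 * 1 := by simpa using hbdd x y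
      _ ≤ C * b⁻¹ * nndist x y ^ (r : ℝ) := by
        gcongr
        · exact one_le_inv₀ hb₀ |>.2 hb₁
        · exact NNReal.one_le_rpow hd.le r.coe_nonneg
  obtain ⟨k, hk, hk'⟩ :=
    exists_nat_pow_near_of_lt_one (pos_iff_ne_zero.2 (by simpa using hxy)) hd ha₀ ha₁
  calc nndist (f x) (f y) ≤ C * b ^ k := hf k x y hk'
    _ = C * b⁻¹ * (a ^ (k + 1)) ^ (r : ℝ) := by
      rw [← NNReal.rpow_natCast a, ← NNReal.rpow_mul, mul_comm (_ : ℝ), NNReal.rpow_mul, hab,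
        NNReal.rpow_natCast, pow_succ', ← mul_assoc, mul_assoc C, inv_mul_cancel₀ hb₀.ne',
        mul_one]
    _ ≤ C * b⁻¹ * nndist x y ^ (r : ℝ) := by gcongr

lemma Int.mem_Icc_ceil_of_abs_sub_le {w : ℤ} {a : ℝ} {r : ℕ} (h : |(w : ℝ) - a| ≤ r) :
    w ∈ Finset.Icc (⌈a⌉ - r) (⌈a⌉ + r) := by
  rw [abs_le] at h
  rw [Finset.mem_Icc]
  constructor
  · have : ⌈a⌉ < w + r + 1 := Int.ceil_lt_iff.2 (by push_cast; linarith)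
    omega
  · have : ((w - r : ℤ) : ℝ) ≤ ⌈a⌉ := by push_cast; linarith [Int.le_ceil a]
    have := Int.cast_le.1 this
    omega

noncomputable section
namespace HilbertCurve

local notation "ℝ³" => ℝ × ℝ × ℝ

/-- `step 1 d` is twice the `d`-th similarity of the curve; with `T = 2 ^ (k + 1)` the same
formulas send integer coordinates of cell centres of level `k` to those of level `k + 1`. -/
def step {R : Type*} [Ring R] (T : R) : ℕ → R × R × R → R × R × R
  | 0, (x, y, z) => (x, z, y)
  | 1, (x, y, z) => (x, y + T, z)
  | 2, (x, y, z) => (z, x + T, y + T)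
  | 3, (x, y, z) => (x + T, y + T, T - z)
  | 4, (x, y, z) => (x + T, T - y, z)
  | 5, (x, y, z) => (x + T, y + T, z + T)
  | 6, (x, y, z) => (x + T, T - z, 2 * T - y)
  | _ + 7, (x, y, z) => (T - z, x, 2 * T - y)

lemma step_smul {R : Type*} [CommRing R] (c T : R) (d : ℕ) (v : R × R × R) :
    step (c * T) d (c • v) = c • step T d v := by
  obtain ⟨x, y, z⟩ := v
  rcases d with _ | _ | _ | _ | _ | _ | _ | d <;> ext <;>
    simp only [step, Prod.smul_fst, Prod.smul_snd, smul_eq_mul] <;> ring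

lemma dist_step (d : ℕ) (u v : ℝ³) : dist (step 1 d u) (step 1 d v) = dist u v := by
  obtain ⟨x, y, z⟩ := u
  obtain ⟨x', y', z'⟩ := v
  rcases d with _ | _ | _ | _ | _ | _ | _ | d <;>
    simp [step, Prod.dist_eq, Real.dist_eq, sub_add, max_comm, max_left_comm]

def sim (d : ℕ) (v : ℝ³) : ℝ³ := (2 : ℝ)⁻¹ • step 1 d v

lemma dist_sim (d : ℕ) (u v : ℝ³) : dist (sim d u) (sim d v) = 2⁻¹ * dist u v := by
  rw [sim, sim, dist_smul₀, dist_step, Real.norm_of_nonneg (by norm_num)]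

lemma lipschitzWith_sim (d : ℕ) : LipschitzWith 2⁻¹ (sim d) :=
  .of_dist_le_mul fun u v => by simp [dist_sim]

def cube : Set ℝ³ := Icc 0 1 ×ˢ Icc 0 1 ×ˢ Icc 0 1

lemma isClosed_cube : IsClosed cube := isClosed_Icc.prod (isClosed_Icc.prod isClosed_Icc)

lemma dist_le_one_of_mem_cube {u v : ℝ³} (hu : u ∈ cube) (hv : v ∈ cube) : dist u v ≤ 1 := by
  simp only [cube, mem_prod] at hu hv
  simp only [Prod.dist_eq, max_le_iff]
  exact ⟨Real.dist_le_of_mem_Icc_01 hu.1 hv.1, Real.dist_le_of_mem_Icc_01 hu.2.1 hv.2.1,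
    Real.dist_le_of_mem_Icc_01 hu.2.2 hv.2.2⟩

lemma sim_mem_cube (d : ℕ) {v : ℝ³} (hv : v ∈ cube) : sim d v ∈ cube := by
  obtain ⟨x, y, z⟩ := v
  obtain ⟨⟨hx, hx'⟩, ⟨hy, hy'⟩, ⟨hz, hz'⟩⟩ := hv
  rcases d with _ | _ | _ | _ | _ | _ | _ | d <;>
    simp only [cube, sim, step, Prod.smul_mk, smul_eq_mul, mem_prod, mem_Icc] <;>
    refine ⟨⟨?_, ?_⟩, ⟨?_, ?_⟩, ⟨?_, ?_⟩⟩ <;> linarith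

def entryPt : ℝ³ := (0, 0, 0)
def exitPt : ℝ³ := (0, 0, 1)

lemma entryPt_mem_cube : entryPt ∈ cube := by simp [entryPt, cube]
lemma exitPt_mem_cube : exitPt ∈ cube := by simp [exitPt, cube]

lemma sim_zero_entryPt : sim 0 entryPt = entryPt := by simp [sim, step, entryPt]
lemma sim_seven_exitPt : sim 7 exitPt = exitPt := by norm_num [sim, step, exitPt]
lemma sim_exitPt_eq_sim_succ_entryPt {d : ℕ} (hd : d < 7) : sim d exitPt = sim (d + 1) entryPt := by
  interval_cases d <;> norm_num [sim, step, exitPt, entryPt]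

-- Capped at `7`, so that every `x ≥ 7/8`, including `x = 1`, has digit `7`.
def digit (x : ℝ) : ℕ := min 7 ⌊8 * x⌋₊

def shift (x : ℝ) : ℝ := 8 * x - digit x

lemma digit_le_seven (x : ℝ) : digit x ≤ 7 := min_le_left _ _

lemma digit_mono : Monotone digit := fun _ _ h =>
  min_le_min_left _ (Nat.floor_mono (by linarith))

lemma digit_of_lt {x : ℝ} (hx : x < 8⁻¹) : digit x = 0 := by
  simp [digit, Nat.floor_eq_zero.2 (by linarith : 8 * x < 1)]

lemma digit_of_le {x : ℝ} (hx : 7 / 8 ≤ x) : digit x = 7 :=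
  min_eq_left (Nat.le_floor (by push_cast; linarith))

lemma digit_le_digit_add_one {x y : ℝ} (h : 8 * y ≤ 8 * x + 1) : digit y ≤ digit x + 1 := by
  have : ⌊8 * y⌋₊ ≤ ⌊8 * x⌋₊ + 1 := by
    rcases le_or_gt 0 (8 * x) with hx | hx
    · exact (Nat.floor_mono h).trans (Nat.floor_add_one hx).le
    · simp [Nat.floor_eq_zero.2 (by linarith : 8 * y < 1)]
  unfold digit; omega

lemma mul_lt_digit_add_one {x : ℝ} (h : digit x < 7) : 8 * x < digit x + 1 := by
  have : digit x = ⌊8 * x⌋₊ := by unfold digit at h ⊢; omega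
  rw [this]; exact Nat.lt_floor_add_one _

lemma digit_le_mul {x : ℝ} (h : digit x ≠ 0) : (digit x : ℝ) ≤ 8 * x :=
  (Nat.le_floor_iff' h).1 (min_le_right _ _)

def subdivide (g : ℝ → ℝ³) (x : ℝ) : ℝ³ := sim (digit x) (g (shift x))

lemma subdivide_mem_cube {g : ℝ → ℝ³} (hg : ∀ x, g x ∈ cube) (x : ℝ) : subdivide g x ∈ cube :=
  sim_mem_cube _ (hg _)

lemma iterate_subdivide_mem_cube {g : ℝ → ℝ³} (hg : ∀ x, g x ∈ cube) (k : ℕ) (x : ℝ) :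
    subdivide^[k] g x ∈ cube := by
  induction k generalizing g with
  | zero => exact hg x
  | succ k ih => exact ih (subdivide_mem_cube hg)

lemma dist_iterate_subdivide_le {g g' : ℝ → ℝ³} {c : ℝ} (h : ∀ x, dist (g x) (g' x) ≤ c)
    (k : ℕ) (x : ℝ) : dist (subdivide^[k] g x) (subdivide^[k] g' x) ≤ 2⁻¹ ^ k * c := by
  induction k generalizing x with
  | zero => simpa using h x
  | succ k ih =>
    rw [Function.iterate_succ_apply', Function.iterate_succ_apply', subdivide, subdivide,
      dist_sim, pow_succ', mul_assoc]
    gcongr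
    exact ih _

def approx (k : ℕ) : ℝ → ℝ³ := subdivide^[k] fun _ => entryPt

lemma cauchySeq_approx (x : ℝ) : CauchySeq fun k => approx k x := by
  refine cauchySeq_of_le_geometric 2⁻¹ 1 (by norm_num) fun k => ?_
  rw [approx, approx, Function.iterate_succ_apply, mul_comm, dist_comm]
  exact dist_iterate_subdivide_le (fun y => dist_le_one_of_mem_cube
    (subdivide_mem_cube (fun _ => entryPt_mem_cube) y) entryPt_mem_cube) k x

def curve (x : ℝ) : ℝ³ := limUnder atTop fun k => approx k x

lemma tendsto_approx (x : ℝ) : Tendsto (fun k => approx k x) atTop (𝓝 (curve x)) :=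
  (cauchySeq_approx x).tendsto_limUnder

lemma curve_mem_cube (x : ℝ) : curve x ∈ cube :=
  isClosed_cube.mem_of_tendsto (tendsto_approx x) (.of_forall fun k =>
    iterate_subdivide_mem_cube (fun _ => entryPt_mem_cube) k x)

lemma subdivide_curve : subdivide curve = curve := by
  funext x
  have h : Tendsto (fun k => approx (k + 1) x) atTop (𝓝 (subdivide curve x)) := by
    simp only [approx, Function.iterate_succ_apply']
    exact ((lipschitzWith_sim _).continuous.tendsto _).comp (tendsto_approx (shift x))
  exact tendsto_nhds_unique h ((tendsto_approx x).comp (tendsto_add_atTop_nat 1))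

lemma curve_eq (x : ℝ) : curve x = sim (digit x) (curve (shift x)) :=
  (congrFun subdivide_curve x).symm

lemma dist_curve_entryPt_le (k : ℕ) {u : ℝ} (hu : u < 8⁻¹ ^ k) :
    dist (curve u) entryPt ≤ 2⁻¹ ^ k := by
  induction k generalizing u with
  | zero => simpa using dist_le_one_of_mem_cube (curve_mem_cube u) entryPt_mem_cube
  | succ k ih =>
    have hd : digit u = 0 := digit_of_lt (hu.trans_le (pow_le_of_le_one (by norm_num) (by norm_num)
      k.succ_ne_zero))
    have hs : shift u < 8⁻¹ ^ k := by
      rw [shift, hd]; rw [pow_succ] at hu; push_cast; linarith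
    rw [curve_eq, hd, ← sim_zero_entryPt, dist_sim, pow_succ']
    gcongr
    exact ih hs

lemma dist_curve_exitPt_le (k : ℕ) {u : ℝ} (hu : 1 - 8⁻¹ ^ k ≤ u) :
    dist (curve u) exitPt ≤ 2⁻¹ ^ k := by
  induction k generalizing u with
  | zero => simpa using dist_le_one_of_mem_cube (curve_mem_cube u) exitPt_mem_cube
  | succ k ih =>
    have h8 : (8⁻¹ : ℝ) ^ (k + 1) ≤ 8⁻¹ := pow_le_of_le_one (by norm_num) (by norm_num)
      k.succ_ne_zero
    have hd : digit u = 7 := digit_of_le (by linarith)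
    have hs : 1 - 8⁻¹ ^ k ≤ shift u := by
      rw [shift, hd]; rw [pow_succ] at hu; push_cast; linarith
    rw [curve_eq, hd, ← sim_seven_exitPt, dist_sim, pow_succ']
    gcongr
    exact ih hs

-- Points at distance `≤ 8^-(k+1)` have equal or consecutive digits `d ≤ d'`; in the second
-- case both images are close to `sim d exitPt = sim d' entryPt`.
lemma dist_curve_le (k : ℕ) {x y : ℝ} (hxy : |x - y| ≤ 8⁻¹ ^ k) :
    dist (curve x) (curve y) ≤ 2 * 2⁻¹ ^ k := by
  induction k generalizing x y with
  | zero =>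
    simpa using (dist_le_one_of_mem_cube (curve_mem_cube x) (curve_mem_cube y)).trans one_le_two
  | succ k ih =>
    wlog hle : x ≤ y generalizing x y
    · rw [dist_comm]; exact this (by rwa [abs_sub_comm]) (le_of_not_ge hle)
    rw [abs_sub_comm, abs_of_nonneg (sub_nonneg.2 hle), pow_succ] at hxy
    have h8 : (8⁻¹ : ℝ) ^ k ≤ 1 := pow_le_one₀ (by norm_num) (by norm_num)
    rcases (digit_mono hle).eq_or_lt with hd | hd
    · have hs : |shift x - shift y| ≤ 8⁻¹ ^ k := by
        rw [shift, shift, hd, abs_le]; constructor <;> linarith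
      rw [curve_eq x, curve_eq y, hd, dist_sim, pow_succ']
      linarith [ih hs]
    · have hd' : digit y = digit x + 1 :=
        le_antisymm (digit_le_digit_add_one (by linarith)) hd
      have hx7 : digit x < 7 := by have := digit_le_seven y; omega
      have hx := mul_lt_digit_add_one hx7
      have hy := digit_le_mul (x := y) (by omega)
      rw [hd'] at hy; push_cast at hy
      have hsx : 1 - 8⁻¹ ^ k ≤ shift x := by rw [shift]; linarith
      have hsy : shift y < 8⁻¹ ^ k := by rw [shift, hd']; push_cast; linarith
      calc dist (curve x) (curve y)
          ≤ dist (sim (digit x) (curve (shift x))) (sim (digit x) exitPt) +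
            dist (sim (digit x + 1) entryPt) (sim (digit x + 1) (curve (shift y))) := by
            rw [curve_eq x, curve_eq y, hd', sim_exitPt_eq_sim_succ_entryPt hx7]
            exact dist_triangle _ _ _
        _ ≤ 2⁻¹ * 2⁻¹ ^ k + 2⁻¹ * 2⁻¹ ^ k := by
            rw [dist_sim, dist_sim, dist_comm entryPt]
            gcongr
            · exact dist_curve_exitPt_le k hsx
            · exact dist_curve_entryPt_le k hsy
        _ = 2 * 2⁻¹ ^ (k + 1) := by ring

theorem holderWith_curve : HolderWith 4 3⁻¹ curve := by
  have h : HolderWith (2 * 2⁻¹⁻¹) 3⁻¹ curve := by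
    refine .of_nndist_le_pow (a := 8⁻¹) (by norm_num) (by norm_num) ?_ (fun x y => ?_)
      (fun k x y hxy => ?_)
    · rw [show (8⁻¹ : ℝ≥0) = 2⁻¹ ^ 3 by norm_num, NNReal.coe_inv, NNReal.coe_ofNat]
      exact_mod_cast NNReal.pow_rpow_inv_natCast _ three_ne_zero
    · rw [← NNReal.coe_le_coe, coe_nndist]
      exact (dist_le_one_of_mem_cube (curve_mem_cube x) (curve_mem_cube y)).trans (by norm_num)
    · rw [← NNReal.coe_le_coe, coe_nndist] at hxy ⊢
      push_cast at hxy ⊢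
      exact dist_curve_le k hxy
  convert h using 1
  norm_num

def box (T : ℤ) : Set (ℤ × ℤ × ℤ) := Ioo 0 T ×ˢ Ioo 0 T ×ˢ Ioo 0 T

lemma step_mem_box (d : ℕ) {T : ℤ} {w : ℤ × ℤ × ℤ} (hw : w ∈ box T) : step T d w ∈ box (2 * T) := by
  obtain ⟨a, b, c⟩ := w
  simp only [box, mem_prod, mem_Ioo] at hw
  rcases d with _ | _ | _ | _ | _ | _ | _ | d <;>
    simp only [box, step, mem_prod, mem_Ioo] <;> omega

lemma eq_of_step_eq_step {T : ℤ} {d₁ d₂ : ℕ} (hd₁ : d₁ ≤ 7) (hd₂ : d₂ ≤ 7)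
    {u v : ℤ × ℤ × ℤ} (hu : u ∈ box T) (hv : v ∈ box T) (h : step T d₁ u = step T d₂ v) :
    d₁ = d₂ ∧ u = v := by
  obtain ⟨a, b, c⟩ := u
  obtain ⟨a', b', c'⟩ := v
  simp only [box, mem_prod, mem_Ioo] at hu hv
  interval_cases d₁ <;> interval_cases d₂ <;>
    simp only [step, Prod.mk.injEq, true_and] at h ⊢ <;> omega

-- Centre, in units of `2^-(k+1)`, of the dyadic cube filled by the `n`-th piece of level `k`.
def cellCenter : ℕ → ℕ → ℤ × ℤ × ℤ
  | 0, _ => (1, 1, 1)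
  | k + 1, n => step (2 ^ (k + 1)) (n / 8 ^ k) (cellCenter k (n % 8 ^ k))

lemma cellCenter_succ_add {k n : ℕ} (hn : n < 8 ^ k) (d : ℕ) :
    cellCenter (k + 1) (8 ^ k * d + n) = step (2 ^ (k + 1)) d (cellCenter k n) := by
  have h8 : 0 < 8 ^ k := by positivity
  rw [cellCenter, Nat.mul_add_div h8, Nat.div_eq_of_lt hn, add_zero, Nat.mul_add_mod,
    Nat.mod_eq_of_lt hn]

lemma cellCenter_mem_box (k n : ℕ) : cellCenter k n ∈ box (2 ^ (k + 1)) := by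
  induction k generalizing n with
  | zero => simp [cellCenter, box]
  | succ k ih => rw [pow_succ', cellCenter]; exact step_mem_box _ (ih _)

lemma cellCenter_injOn (k : ℕ) : InjOn (cellCenter k) (Iio (8 ^ k)) := by
  induction k with
  | zero => intro n hn m hm _; simp_all
  | succ k ih =>
    intro n hn m hm h
    have hdiv {n : ℕ} (hn : n < 8 ^ (k + 1)) : n / 8 ^ k ≤ 7 :=
      Nat.lt_succ_iff.1 (Nat.div_lt_of_lt_mul (by rwa [← pow_succ]))
    obtain ⟨hd, hr⟩ := eq_of_step_eq_step (hdiv hn) (hdiv hm) (cellCenter_mem_box _ _)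
      (cellCenter_mem_box _ _) h
    have hr' := ih (Nat.mod_lt _ (by positivity)) (Nat.mod_lt _ (by positivity)) hr
    rw [← Nat.div_add_mod n (8 ^ k), ← Nat.div_add_mod m (8 ^ k), hd, hr']

def castR3 (w : ℤ × ℤ × ℤ) : ℝ³ := (w.1, w.2.1, w.2.2)

lemma castR3_step (T : ℤ) (d : ℕ) (w : ℤ × ℤ × ℤ) :
    castR3 (step T d w) = step (T : ℝ) d (castR3 w) := by
  obtain ⟨a, b, c⟩ := w
  rcases d with _ | _ | _ | _ | _ | _ | _ | d <;> simp [step, castR3]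

lemma sim_smul_castR3 (d k : ℕ) (w : ℤ × ℤ × ℤ) :
    sim d (((2 : ℝ) ^ (k + 1))⁻¹ • castR3 w) =
      ((2 : ℝ) ^ (k + 2))⁻¹ • castR3 (step (2 ^ (k + 1)) d w) := by
  have h : (1 : ℝ) = ((2 : ℝ) ^ (k + 1))⁻¹ * 2 ^ (k + 1) := (inv_mul_cancel₀ (by positivity)).symm
  rw [sim, h, step_smul, castR3_step, smul_smul, pow_succ _ (k + 1), mul_inv]
  push_cast
  ring_nf

lemma digit_eq_floor {y : ℝ} (hy : y < 1) : digit y = ⌊8 * y⌋₊ :=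
  min_eq_right (Nat.le_of_lt_succ ((Nat.floor_lt' (by norm_num)).2 (by push_cast; linarith)))

lemma shift_mem_Ico {y : ℝ} (hy : y ∈ Ico 0 1) : shift y ∈ Ico 0 1 := by
  rw [shift, digit_eq_floor hy.2]
  constructor
  · linarith [Nat.floor_le (by linarith [hy.1] : 0 ≤ 8 * y)]
  · linarith [Nat.lt_floor_add_one (8 * y)]

def cellIndex (k : ℕ) (y : ℝ) : ℕ := ⌊8 ^ k * y⌋₊

lemma cellIndex_lt (k : ℕ) {y : ℝ} (hy : y < 1) : cellIndex k y < 8 ^ k :=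
  (Nat.floor_lt' (by positivity)).2
    (by push_cast; nlinarith [pow_pos (by norm_num : (0 : ℝ) < 8) k])

lemma cellIndex_succ (k : ℕ) {y : ℝ} (hy : y ∈ Ico 0 1) :
    cellIndex (k + 1) y = 8 ^ k * digit y + cellIndex k (shift y) := by
  have h : (8 : ℝ) ^ (k + 1) * y = 8 ^ k * shift y + ((8 ^ k * digit y : ℕ) : ℝ) := by
    rw [shift]; push_cast; ring
  rw [cellIndex, h, Nat.floor_add_natCast (by have := (shift_mem_Ico hy).1; positivity), add_comm]
  rfl

lemma mem_Icc_cellIndex (k : ℕ) {y : ℝ} (hy : 0 ≤ y) :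
    y ∈ Icc ((cellIndex k y : ℝ) / 8 ^ k) ((cellIndex k y + 1) / 8 ^ k) := by
  have h8 : (0 : ℝ) < 8 ^ k := by positivity
  rw [mem_Icc, div_le_iff₀ h8, le_div_iff₀ h8, mul_comm y]
  exact ⟨Nat.floor_le (by positivity), (Nat.lt_floor_add_one _).le⟩

def center : ℝ³ := (2⁻¹, 2⁻¹, 2⁻¹)

lemma dist_center_le {v : ℝ³} (hv : v ∈ cube) : dist v center ≤ 2⁻¹ := by
  obtain ⟨⟨hx, hx'⟩, ⟨hy, hy'⟩, ⟨hz, hz'⟩⟩ := hv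
  simp only [center, Prod.dist_eq, Real.dist_eq, max_le_iff, abs_sub_le_iff]
  refine ⟨⟨?_, ?_⟩, ⟨?_, ?_⟩, ⟨?_, ?_⟩⟩ <;> linarith

lemma iterate_subdivide_center {y : ℝ} (hy : y ∈ Ico 0 1) (k : ℕ) :
    subdivide^[k] (fun _ => center) y =
      ((2 : ℝ) ^ (k + 1))⁻¹ • castR3 (cellCenter k (cellIndex k y)) := by
  induction k generalizing y with
  | zero => norm_num [center, cellCenter, castR3]
  | succ k ih =>
    rw [Function.iterate_succ_apply', subdivide, ih (shift_mem_Ico hy), sim_smul_castR3,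
      cellIndex_succ k hy, cellCenter_succ_add (cellIndex_lt k (shift_mem_Ico hy).2)]

lemma dist_curve_cellCenter_le {y : ℝ} (hy : y ∈ Ico 0 1) (k : ℕ) :
    dist (curve y) (((2 : ℝ) ^ (k + 1))⁻¹ • castR3 (cellCenter k (cellIndex k y))) ≤
      ((2 : ℝ) ^ (k + 1))⁻¹ := by
  rw [← iterate_subdivide_center hy, ← Function.iterate_fixed subdivide_curve k, ← inv_pow,
    pow_succ]
  exact dist_iterate_subdivide_le (fun x => dist_center_le (curve_mem_cube x)) k y

lemma card_cellCenter_near_le (k : ℕ) (z : ℝ³) :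
    ((Finset.range (8 ^ k)).filter fun n =>
      dist (((2 : ℝ) ^ (k + 1))⁻¹ • castR3 (cellCenter k n)) z ≤ 3 * ((2 : ℝ) ^ (k + 1))⁻¹).card ≤
      7 ^ 3 := by
  set T : ℝ := 2 ^ (k + 1)
  have hT : 0 < T := by positivity
  have hcoord (w : ℤ) (a : ℝ) (h : dist (T⁻¹ * w) a ≤ 3 * T⁻¹) :
      w ∈ Finset.Icc (⌈T * a⌉ - 3) (⌈T * a⌉ + 3) := by
    have : |(w : ℝ) - T * a| ≤ 3 := by
      calc |(w : ℝ) - T * a| = |T * (T⁻¹ * w - a)| := by congr 1; field_simp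
        _ = T * dist (T⁻¹ * w) a := by rw [abs_mul, abs_of_pos hT, Real.dist_eq]
        _ ≤ T * (3 * T⁻¹) := by gcongr
        _ = 3 := by field_simp
    exact_mod_cast Int.mem_Icc_ceil_of_abs_sub_le (r := 3) (by exact_mod_cast this)
  calc _ ≤ (Finset.Icc (⌈T * z.1⌉ - 3) (⌈T * z.1⌉ + 3) ×ˢ
        Finset.Icc (⌈T * z.2.1⌉ - 3) (⌈T * z.2.1⌉ + 3) ×ˢ
        Finset.Icc (⌈T * z.2.2⌉ - 3) (⌈T * z.2.2⌉ + 3)).card := by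
        refine Finset.card_le_card_of_injOn (cellCenter k) (fun n hn => ?_)
          ((cellCenter_injOn k).mono fun n hn => ?_)
        · simp only [Finset.coe_filter, Finset.mem_range, mem_ofPred_eq] at hn
          have h := hn.2
          simp only [castR3, Prod.smul_mk, smul_eq_mul, Prod.dist_eq, max_le_iff] at h
          simp only [Finset.coe_product, mem_prod, Finset.mem_coe]
          exact ⟨hcoord _ _ h.1, hcoord _ _ h.2.1, hcoord _ _ h.2.2⟩
        · simp only [Finset.coe_filter, Finset.mem_range, mem_ofPred_eq] at hn
          exact hn.1
    _ = 7 ^ 3 := by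
        have h7 (a : ℤ) : (a + 3 + 1 - (a - 3)).toNat = 7 := by omega
        simp [Finset.card_product, h7]

theorem restrict_Icc_edist_curve_le (k : ℕ) (z : ℝ³) :
    volume.restrict (Icc (0 : ℝ) 1) {y | edist (curve y) z ≤ 2⁻¹ ^ k} ≤ 7 ^ 3 * 8⁻¹ ^ k := by
  set T : ℝ := 2 ^ (k + 1)
  set S := (Finset.range (8 ^ k)).filter fun n =>
    dist (T⁻¹ • castR3 (cellCenter k n)) z ≤ 3 * T⁻¹
  have hcover : {y | edist (curve y) z ≤ 2⁻¹ ^ k} ∩ Ico 0 1 ⊆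
      ⋃ n ∈ S, Icc ((n : ℝ) / 8 ^ k) ((n + 1) / 8 ^ k) := by
    rintro y ⟨hyz, hy⟩
    have hyz' : dist (curve y) z ≤ 2 * T⁻¹ := by
      rw [mem_ofPred_eq, show (2⁻¹ : ℝ≥0∞) ^ k = ENNReal.ofReal ((2 ^ k)⁻¹) by
        rw [ENNReal.ofReal_inv_of_pos (by positivity), ENNReal.ofReal_pow zero_le_two,
          ENNReal.ofReal_ofNat, ENNReal.inv_pow], edist_le_ofReal (by positivity)] at hyz
      calc _ ≤ ((2 : ℝ) ^ k)⁻¹ := hyz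
        _ = 2 * T⁻¹ := by simp only [T]; field_simp; ring
    refine mem_biUnion (x := cellIndex k y) ?_ (mem_Icc_cellIndex k hy.1)
    refine Finset.mem_filter.2 ⟨Finset.mem_range.2 (cellIndex_lt k hy.2), ?_⟩
    calc _ ≤ dist (T⁻¹ • castR3 (cellCenter k (cellIndex k y))) (curve y) + dist (curve y) z :=
          dist_triangle _ _ _
      _ ≤ T⁻¹ + 2 * T⁻¹ := by
          rw [dist_comm]; exact add_le_add (dist_curve_cellCenter_le hy k) hyz'
      _ = 3 * T⁻¹ := by ring
  calc _ = volume ({y | edist (curve y) z ≤ 2⁻¹ ^ k} ∩ Ico 0 1) := by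
        rw [← Measure.restrict_congr_set Ico_ae_eq_Icc, Measure.restrict_apply' measurableSet_Ico]
    _ ≤ ∑ n ∈ S, volume (Icc ((n : ℝ) / 8 ^ k) ((n + 1) / 8 ^ k)) :=
        (measure_mono hcover).trans (measure_biUnion_finset_le _ _)
    _ = S.card * 8⁻¹ ^ k := by
        rw [Finset.sum_congr rfl fun n _ => by
          rw [Real.volume_Icc, ← sub_div, add_sub_cancel_left, one_div,
            ENNReal.ofReal_inv_of_pos (by positivity), ENNReal.ofReal_pow (by norm_num),
            ENNReal.ofReal_ofNat, ENNReal.inv_pow], Finset.sum_const, nsmul_eq_mul]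
    _ ≤ 7 ^ 3 * 8⁻¹ ^ k := by
        have hS : (S.card : ℝ≥0∞) ≤ (7 ^ 3 : ℕ) := Nat.cast_le.2 (card_cellCenter_near_le k z)
        gcongr
        exact_mod_cast hS

theorem lintegral_inv_edist_curve_sq_lt_top :
    ∫⁻ p, (edist (curve p.1) (curve p.2) ^ 2)⁻¹
      ∂((volume.restrict (Icc (0 : ℝ) 1)).prod (volume.restrict (Icc (0 : ℝ) 1))) < ∞ := by
  set μ := volume.restrict (Icc (0 : ℝ) 1)
  have hc : Continuous curve := holderWith_curve.continuous (by norm_num)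
  calc _ ≤ ∫⁻ x, ∫⁻ y, (edist (curve x) (curve y) ^ 2)⁻¹ ∂μ ∂μ := lintegral_prod_le _
    _ ≤ ∫⁻ _, μ univ + 8 * 7 ^ 3 ∂μ := lintegral_mono fun x => by
        simp_rw [edist_comm (curve x)]
        exact lintegral_inv_edist_sq_le (hc.edist continuous_const).measurable
          fun k => restrict_Icc_edist_curve_le k (curve x)
    _ < ∞ := by simp [μ, lintegral_const, ENNReal.mul_lt_top]

lemma norm_mk_sub_mk_le (u v : ℝ³) : ‖(⟨u.1, u.2.1⟩ - ⟨v.1, v.2.1⟩ : ℂ)‖ ≤ 2 * dist u v := by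
  have h₁ : |u.1 - v.1| ≤ dist u v := by
    rw [Prod.dist_eq, ← Real.dist_eq]; exact le_max_left _ _
  have h₂ : |u.2.1 - v.2.1| ≤ dist u v := by
    rw [Prod.dist_eq, Prod.dist_eq, ← Real.dist_eq]
    exact (le_max_left _ _).trans (le_max_right _ _)
  have := Complex.norm_le_abs_re_add_abs_im (⟨u.1, u.2.1⟩ - ⟨v.1, v.2.1⟩ : ℂ)
  simp only [Complex.sub_re, Complex.sub_im] at this
  linarith

lemma norm_ofReal_sub_le (u v : ℝ³) : ‖(u.2.2 - v.2.2 : ℂ)‖ ≤ dist u v := by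
  rw [← Complex.ofReal_sub, Complex.norm_real, Real.norm_eq_abs, Prod.dist_eq, Prod.dist_eq,
    ← Real.dist_eq]
  exact (le_max_right _ _).trans (le_max_right _ _)

lemma dist_sq_le_norm_sq_add_norm_sq (u v : ℝ³) :
    dist u v ^ 2 ≤ ‖(⟨u.1, u.2.1⟩ - ⟨v.1, v.2.1⟩ : ℂ)‖ ^ 2 + ‖(u.2.2 - v.2.2 : ℂ)‖ ^ 2 := by
  have hS : ‖(⟨u.1, u.2.1⟩ - ⟨v.1, v.2.1⟩ : ℂ)‖ ^ 2 + ‖(u.2.2 - v.2.2 : ℂ)‖ ^ 2 =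
      (u.1 - v.1) ^ 2 + (u.2.1 - v.2.1) ^ 2 + (u.2.2 - v.2.2) ^ 2 := by
    rw [Complex.sq_norm, Complex.sq_norm, ← Complex.ofReal_sub, Complex.normSq_ofReal]
    exact (congrArg₂ (· + ·) (Complex.normSq_mk _ _) rfl).trans (by ring)
  have hle : dist u v ≤ √((u.1 - v.1) ^ 2 + (u.2.1 - v.2.1) ^ 2 + (u.2.2 - v.2.2) ^ 2) := by
    simp only [Prod.dist_eq, Real.dist_eq, max_le_iff]
    refine ⟨Real.abs_le_sqrt ?_, Real.abs_le_sqrt ?_, Real.abs_le_sqrt ?_⟩ <;> nlinarith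
  rw [hS, ← Real.sq_sqrt (by positivity : (0 : ℝ) ≤ (u.1 - v.1) ^ 2 + (u.2.1 - v.2.1) ^ 2 +
    (u.2.2 - v.2.2) ^ 2)]
  exact pow_le_pow_left₀ dist_nonneg hle 2

end HilbertCurve
end

open HilbertCurve

/-- There exist functions `f₁, f₂ : [0,1] → ℂ` which are Hölder continuous with exponent
`1/3` and functions `F₁, F₂ ∈ L²([0,1]²)` such that
`(f₁ x - f₁ y) F₁ (x,y) + (f₂ x - f₂ y) F₂ (x,y) = 1` almost everywhere. -/
theorem exists_lipThird_L2_solution :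
    ∃ (f₁ f₂ : ℝ → ℂ) (F₁ F₂ : ℝ × ℝ → ℂ),
      (∃ C : ℝ, ∀ x ∈ Set.Icc (0 : ℝ) 1, ∀ y ∈ Set.Icc (0 : ℝ) 1,
        ‖f₁ x - f₁ y‖ ≤ C * |x - y| ^ ((1 : ℝ) / 3)) ∧
      (∃ C : ℝ, ∀ x ∈ Set.Icc (0 : ℝ) 1, ∀ y ∈ Set.Icc (0 : ℝ) 1,
        ‖f₂ x - f₂ y‖ ≤ C * |x - y| ^ ((1 : ℝ) / 3)) ∧
      MemLp F₁ 2 ((volume.restrict (Set.Icc (0 : ℝ) 1)).prod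
        (volume.restrict (Set.Icc (0 : ℝ) 1))) ∧
      MemLp F₂ 2 ((volume.restrict (Set.Icc (0 : ℝ) 1)).prod
        (volume.restrict (Set.Icc (0 : ℝ) 1))) ∧
      (∀ᵐ p ∂((volume.restrict (Set.Icc (0 : ℝ) 1)).prod
          (volume.restrict (Set.Icc (0 : ℝ) 1))),
        (f₁ p.1 - f₁ p.2) * F₁ p + (f₂ p.1 - f₂ p.2) * F₂ p = 1) := by
  let f₁ : ℝ → ℂ := fun x => ⟨(curve x).1, (curve x).2.1⟩
  let f₂ : ℝ → ℂ := fun x => (curve x).2.2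
  have hc : Continuous curve := holderWith_curve.continuous (by norm_num)
  have hf₁ : Continuous f₁ := Complex.equivRealProdCLM.symm.continuous.comp
    (by fun_prop : Continuous fun x => ((curve x).1, (curve x).2.1))
  have hf₂ : Continuous f₂ := by fun_prop
  have hγ (x y : ℝ) : dist (curve x) (curve y) ≤ 4 * |x - y| ^ ((1 : ℝ) / 3) := by
    simpa [Real.dist_eq] using holderWith_curve.dist_le x y
  obtain ⟨F₁, F₂, hF₁, hF₂, hF⟩ := exists_memLp_two_bezout
    (ν := (volume.restrict (Icc (0 : ℝ) 1)).prod (volume.restrict (Icc (0 : ℝ) 1)))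
    (u₁ := fun p => f₁ p.1 - f₁ p.2) (u₂ := fun p => f₂ p.1 - f₂ p.2)
    ((hf₁.comp continuous_fst).sub (hf₁.comp continuous_snd)).aestronglyMeasurable
    ((hf₂.comp continuous_fst).sub (hf₂.comp continuous_snd)).aestronglyMeasurable
    (ne_top_of_le_ne_top lintegral_inv_edist_curve_sq_lt_top.ne (lintegral_mono fun p => by
      rw [ENNReal.inv_le_inv, edist_dist, ← ENNReal.ofReal_pow dist_nonneg]
      exact ENNReal.ofReal_le_ofReal (dist_sq_le_norm_sq_add_norm_sq _ _)))
  refine ⟨f₁, f₂, F₁, F₂, ⟨8, fun x _ y _ => ?_⟩, ⟨4, fun x _ y _ => ?_⟩, hF₁, hF₂, hF⟩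
  · linarith [norm_mk_sub_mk_le (curve x) (curve y), hγ x y]
  · linarith [norm_ofReal_sub_le (curve x) (curve y), hγ x y]
end
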